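/- arXiv:1602.02284 — 9 statements merged into one kernel-verified Lean document; each statement's English description precedes it below -/
import Mathlib

section
/- If a self-reciprocal Littlewood polynomial P(z) = Σ_{j=0}^n a_j z^j with a_j ∈ {-1,1}, a_j = a_{n-j} for all j, and n ≥ 1, then P has at least one zero on the unit circle |z| = 1. -/
open Finset Complex ComplexConjugate Real

/-!
For odd `n`, self-reciprocity gives `P(-1) = -P(-1)`. For `n = 2m`, `T(z) = z̄ ^ m P(z)` is real on
the unit circle, so if `P` had no zero there, `T` would have constant sign on the connected circle.
Sampling at the `N = 2m + 1`-st roots of unity `ζ ^ j`, discrete Fourier inversion gives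
`∑ T(ζ ^ j) = N a_m` and `∑ T(ζ ^ j) Re(ζ ^ (j m)) = N a_0`. As `|Re(ζ ^ (j m))| ≤ 1`, strictly for
`j = 1`, the constant sign forces `|a_0| < |a_m|`, impossible when both coefficients are `±1`.
-/

section Palindromic

variable {R : Type*} [CommRing R] {n : ℕ} {a : ℕ → R}

theorem sum_mul_pow_mul_pow_of_palindromic (hsr : ∀ j ≤ n, a j = a (n - j)) {z w : R}
    (hzw : z * w = 1) :
    (∑ j ∈ range (n + 1), a j * w ^ j) * z ^ n = ∑ j ∈ range (n + 1), a j * z ^ j := by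
  rw [sum_mul, ← sum_range_reflect]
  refine sum_congr rfl fun j hj => ?_
  have hj : j ≤ n := Nat.lt_succ_iff.mp (mem_range.mp hj)
  rw [Nat.add_sub_cancel, ← hsr j hj, ← Nat.sub_add_cancel hj, pow_add z, Nat.add_sub_cancel,
    mul_assoc, ← mul_assoc (w ^ _), ← mul_pow, mul_comm w, hzw, one_pow, one_mul]

theorem sum_mul_neg_one_pow_eq_zero_of_palindromic [IsAddTorsionFree R] (hn : Odd n)
    (hsr : ∀ j ≤ n, a j = a (n - j)) :
    ∑ j ∈ range (n + 1), a j * (-1) ^ j = 0 := by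
  have h := sum_mul_pow_mul_pow_of_palindromic hsr (z := -1) (w := -1) (by norm_num)
  rwa [hn.neg_one_pow, mul_neg_one, neg_eq_self] at h

end Palindromic

namespace IsPrimitiveRoot

variable {K : Type*} [CommRing K] [IsDomain K] {ζ : K} {N : ℕ}

theorem sum_range_pow_pow (hζ : IsPrimitiveRoot ζ N) (k : ℕ) :
    ∑ j ∈ range N, (ζ ^ j) ^ k = if N ∣ k then (N : K) else 0 := by
  simp_rw [← pow_mul, mul_comm _ k, pow_mul]
  split_ifs with hk
  · simp [(hζ.pow_eq_one_iff_dvd k).2 hk]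
  · have h := geom_sum_mul (ζ ^ k) N
    rw [pow_right_comm, hζ.pow_eq_one, one_pow, sub_self] at h
    exact (mul_eq_zero.1 h).resolve_right (sub_ne_zero.2 (mt (hζ.pow_eq_one_iff_dvd k).1 hk))

/-- Discrete Fourier inversion: sampling a polynomial of degree `< N` at the `N`-th roots of
unity recovers its coefficients. -/
theorem sum_range_sum_mul_pow_mul_pow (hζ : IsPrimitiveRoot ζ N) (c : ℕ → K) {r s : ℕ}
    (hr : r < N) (hrs : N ∣ r + s) :
    ∑ j ∈ range N, (∑ k ∈ range N, c k * (ζ ^ j) ^ k) * (ζ ^ j) ^ s = N * c r := by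
  simp_rw [sum_mul, mul_assoc, ← pow_add]
  rw [sum_comm]
  simp_rw [← mul_sum, hζ.sum_range_pow_pow]
  rw [sum_eq_single_of_mem r (mem_range.2 hr)]
  · rw [if_pos hrs, mul_comm]
  · intro k hk hkr
    rw [if_neg, mul_zero]
    intro hks
    have : k ≡ r [MOD N] := Nat.ModEq.add_right_cancel' s
      ((Nat.modEq_zero_iff_dvd.2 hks).trans (Nat.modEq_zero_iff_dvd.2 hrs).symm)
    exact hkr (this.eq_of_lt_of_lt (mem_range.1 hk) hr)

end IsPrimitiveRoot

theorem IsPreconnected.mul_pos_of_ne_zero {X : Type*} [TopologicalSpace X] {s : Set X}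
    {f : X → ℝ} (hs : IsPreconnected s) (hf : ContinuousOn f s) (hf0 : ∀ x ∈ s, f x ≠ 0)
    {x y : X} (hx : x ∈ s) (hy : y ∈ s) : 0 < f x * f y := by
  by_contra! hxy
  have h0 : (0 : ℝ) ∈ Set.uIcc (f x) (f y) := by
    rcases le_total (f x) 0 with h | h
    · exact Set.mem_uIcc.2 (Or.inl ⟨h, by nlinarith [(hf0 x hx).lt_of_le h]⟩)
    · exact Set.mem_uIcc.2 (Or.inr ⟨by nlinarith [(hf0 x hx).symm.lt_of_le h], h⟩)
  rcases Set.mem_uIcc.1 h0 with h | h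
  · obtain ⟨z, hz, hz0⟩ := hs.intermediate_value hx hy hf h
    exact hf0 z hz hz0
  · obtain ⟨z, hz, hz0⟩ := hs.intermediate_value hy hx hf h
    exact hf0 z hz hz0

theorem abs_sum_mul_lt_sum {ι : Type*} {s : Finset ι} {w c : ι → ℝ} (hw : ∀ i ∈ s, 0 < w i)
    (hc : ∀ i ∈ s, |c i| ≤ 1) {i₀ : ι} (hi₀ : i₀ ∈ s) (hc₀ : |c i₀| < 1) :
    |∑ i ∈ s, w i * c i| < ∑ i ∈ s, w i :=
  calc |∑ i ∈ s, w i * c i| ≤ ∑ i ∈ s, w i * |c i| := by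
        refine (abs_sum_le_sum_abs _ _).trans_eq (sum_congr rfl fun i hi => ?_)
        rw [abs_mul, abs_of_pos (hw i hi)]
    _ < ∑ i ∈ s, w i :=
        sum_lt_sum (fun i hi => mul_le_of_le_one_right (hw i hi).le (hc i hi))
          ⟨i₀, hi₀, mul_lt_of_lt_one_right (hw i₀ hi₀) hc₀⟩

theorem Complex.abs_re_lt_one_of_sq_ne_one {z : ℂ} (hz : ‖z‖ = 1) (hz2 : z ^ 2 ≠ 1) :
    |z.re| < 1 := by
  rw [← hz, Complex.abs_re_lt_norm]
  intro him
  apply hz2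
  have hre : z = z.re := Complex.ext rfl (by simpa using him)
  have h1 : |z.re| = 1 := by rw [← hz, Complex.abs_re_eq_norm.2 him]
  rw [hre, ← ofReal_pow, ← sq_abs, h1]
  simp

theorem conj_conj_pow_mul_sum_eq_self_of_palindromic {m : ℕ} {a : ℕ → ℝ}
    (hsr : ∀ j ≤ 2 * m, a j = a (2 * m - j)) {z : ℂ} (hz : ‖z‖ = 1) :
    conj (conj z ^ m * ∑ j ∈ range (2 * m + 1), (a j : ℂ) * z ^ j)
      = conj z ^ m * ∑ j ∈ range (2 * m + 1), (a j : ℂ) * z ^ j := by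
  have hzz : z * conj z = 1 := by rw [mul_conj', hz]; simp
  simp only [map_mul, map_pow, conj_conj, map_sum, conj_ofReal]
  rw [← sum_mul_pow_mul_pow_of_palindromic (fun j hj => congrArg ofReal (hsr j hj)) hzz]
  linear_combination (-(z ^ m * ∑ j ∈ range (2 * m + 1), (a j : ℂ) * conj z ^ j)) *
    congrArg (· ^ m) hzz

theorem conj_pow_eq_pow_of_pow_eq_one {m : ℕ} {w : ℂ} (hw : w ^ (2 * m + 1) = 1) :
    conj w ^ m = w ^ (2 * m * m) := by
  have h1 : (conj w * w) ^ m = 1 := by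
    rw [conj_mul', norm_eq_one_of_pow_eq_one hw (by omega)]
    simp
  have h2 : w ^ (2 * m * m + m) = 1 := by
    rw [show 2 * m * m + m = (2 * m + 1) * m by ring, pow_mul, hw, one_pow]
  linear_combination w ^ (2 * m * m) * h1 - conj w ^ m * h2

theorem exists_norm_eq_one_palindromic_sum_eq_zero {m : ℕ} (hm : 1 ≤ m) {a : ℕ → ℝ}
    (hsr : ∀ j ≤ 2 * m, a j = a (2 * m - j)) (ha : |a m| ≤ |a 0|) :
    ∃ z : ℂ, ‖z‖ = 1 ∧ ∑ j ∈ range (2 * m + 1), (a j : ℂ) * z ^ j = 0 := by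
  by_contra! hP
  set N := 2 * m + 1
  set P : ℂ → ℂ := fun z => ∑ j ∈ range N, (a j : ℂ) * z ^ j
  set T : ℂ → ℝ := fun z => (conj z ^ m * P z).re
  have hTP (z : ℂ) (hz : ‖z‖ = 1) : (T z : ℂ) = conj z ^ m * P z :=
    conj_eq_iff_re.1 (conj_conj_pow_mul_sum_eq_self_of_palindromic hsr hz)
  have hT0 : ∀ z ∈ Metric.sphere (0 : ℂ) 1, T z ≠ 0 := by
    intro z hz hTz
    have hz : ‖z‖ = 1 := mem_sphere_zero_iff_norm.1 hz
    have h := hTP z hz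
    rw [hTz, ofReal_zero, eq_comm, mul_eq_zero, pow_eq_zero_iff (by omega), map_eq_zero] at h
    exact h.elim (fun h0 => by simp [h0] at hz) (hP z hz)
  have hsign : ∀ z ∈ Metric.sphere (0 : ℂ) 1, 0 < T 1 * T z :=
    fun z hz => (isPreconnected_sphere (by simp [rank_real_complex]) 0 1).mul_pos_of_ne_zero
      (by fun_prop) hT0 (by simp) hz
  have hζ : IsPrimitiveRoot (exp (2 * π * I / N)) N := isPrimitiveRoot_exp N (by omega)
  set ζ := exp (2 * π * I / N)
  have hroot (j : ℕ) : ‖ζ ^ j‖ = 1 := by rw [norm_pow, hζ.norm'_eq_one (by omega), one_pow]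
  have hnorm (j : ℕ) : ‖(ζ ^ j) ^ m‖ = 1 := by rw [norm_pow, hroot, one_pow]
  have hsample (j : ℕ) : (T (ζ ^ j) : ℂ) = P (ζ ^ j) * (ζ ^ j) ^ (2 * m * m) := by
    rw [hTP _ (hroot j), mul_comm,
      conj_pow_eq_pow_of_pow_eq_one (by rw [pow_right_comm, hζ.pow_eq_one, one_pow])]
  have hfourier_mid : ∑ j ∈ range N, T (ζ ^ j) = N * a m := by
    have h : ∑ j ∈ range N, (T (ζ ^ j) : ℂ) = N * a m := by
      simp_rw [hsample]
      exact hζ.sum_range_sum_mul_pow_mul_pow (fun k => (a k : ℂ)) (by omega) ⟨m, by ring⟩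
    exact_mod_cast h
  have hfourier_zero : ∑ j ∈ range N, T (ζ ^ j) * ((ζ ^ j) ^ m).re = N * a 0 := by
    have h : ∑ j ∈ range N, (T (ζ ^ j) : ℂ) * (ζ ^ j) ^ m = N * a 0 := by
      simp_rw [hsample, mul_assoc, ← pow_add]
      exact hζ.sum_range_sum_mul_pow_mul_pow (fun k => (a k : ℂ)) (by omega) ⟨m, by ring⟩
    simpa only [re_sum, re_ofReal_mul, ← ofReal_natCast, ← ofReal_mul, ofReal_re]
      using congrArg re h
  have hlt := abs_sum_mul_lt_sum (s := range N) (w := fun j => T 1 * T (ζ ^ j))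
    (c := fun j => ((ζ ^ j) ^ m).re) (fun j _ => hsign _ (by simpa using hroot j))
    (fun j _ => (abs_re_le_norm _).trans (hnorm j).le) (mem_range.2 (by omega : 1 < N))
    (abs_re_lt_one_of_sq_ne_one (hnorm 1) (by
      rw [pow_one, ← pow_mul, Ne, hζ.pow_eq_one_iff_dvd]
      exact Nat.not_dvd_of_pos_of_lt (by omega) (by omega)))
  simp only [mul_assoc, ← mul_sum, hfourier_mid, hfourier_zero] at hlt
  have key := hlt.trans_le (le_abs_self _)
  simp only [abs_mul] at key
  exact key.not_ge (by gcongr)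

/-- A self-reciprocal Littlewood polynomial of degree `n ≥ 1` has a zero on the unit circle. -/
theorem selfReciprocal_littlewood_has_unimodular_zero
    (n : ℕ) (hn : 1 ≤ n) (a : ℕ → ℝ)
    (ha : ∀ j ≤ n, a j = 1 ∨ a j = -1)
    (hsr : ∀ j ≤ n, a j = a (n - j)) :
    ∃ z : ℂ, ‖z‖ = 1 ∧ ∑ j ∈ Finset.range (n + 1), (a j : ℂ) * z ^ j = 0 := by
  rcases Nat.even_or_odd' n with ⟨m, rfl | rfl⟩
  · have habs (j : ℕ) (hj : j ≤ 2 * m) : |a j| = 1 := by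
      rcases ha j hj with h | h <;> simp [h]
    exact exists_norm_eq_one_palindromic_sum_eq_zero (by omega) hsr
      ((habs m (by omega)).trans (habs 0 (by omega)).symm).le
  · exact ⟨-1, by simp, by
      simpa using sum_mul_neg_one_pow_eq_zero_of_palindromic (a := fun j => (a j : ℂ))
        (odd_two_mul_add_one m) fun j hj => congrArg ofReal (hsr j hj)⟩
end

section
/- If P(z) = Σ_{j=0}^n a_j z^j is a skew-reciprocal Littlewood polynomial, i.e., a_j ∈ {-1,1} and a_j = (-1)^j a_{n-j} for each j, then P has no zeros on the unit circle |z| = 1. -/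
/-!
Skew-reciprocity at `j = 0` and `j = n` forces `n` to be even. On the unit circle
`conj z = z⁻¹`, so skew-reciprocity makes
`z ^ n * conj E(z) = E(z)` and `z ^ n * conj O(z) = -O(z)` for the even and odd parts `E`, `O`
of `P`; hence `P(z) = 0` forces `E(z) = O(z) = 0`. The leading coefficient `±1` of `E` makes
`z` an algebraic integer, so its minimal polynomial over `ℤ` divides both `E` and `O`. But
modulo 2 we have `E - X * O ≡ 1`, so the reduced minimal polynomial, monic of positive degree,
would divide `1`.
-/

open Polynomial Finset ComplexConjugate

theorem even_of_skewReciprocal {R : Type*} [Ring R] [IsAddTorsionFree R] {n : ℕ} {c : ℕ → R}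
    (hc : c n ≠ 0) (hsk : ∀ j ≤ n, c j = (-1) ^ j * c (n - j)) : Even n := by
  by_contra hn
  have h0 := hsk 0 n.zero_le
  have hlast := hsk n le_rfl
  rw [Nat.not_even_iff_odd.mp hn |>.neg_one_pow, Nat.sub_self] at hlast
  simp only [pow_zero, one_mul, Nat.sub_zero] at h0
  exact hc (self_eq_neg.mp (by simpa [h0] using hlast))

theorem pow_mul_conj_sum_of_norm_eq_one {z : ℂ} (hz : ‖z‖ = 1) {n : ℕ} {s : Finset ℕ}
    (hs : ∀ j ∈ s, j ≤ n ∧ n - j ∈ s) (c : ℕ → ℂ) :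
    z ^ n * conj (∑ j ∈ s, c j * z ^ j) = ∑ j ∈ s, conj (c (n - j)) * z ^ j := by
  have hz0 : z ≠ 0 := norm_ne_zero_iff.mp (by simp [hz])
  rw [map_sum, mul_sum]
  refine sum_nbij' (n - ·) (n - ·) (fun j hj => (hs j hj).2) (fun j hj => (hs j hj).2)
    (fun j hj => Nat.sub_sub_self (hs j hj).1) (fun j hj => Nat.sub_sub_self (hs j hj).1)
    fun j hj => ?_
  rw [Nat.sub_sub_self (hs j hj).1, map_mul, map_pow, ← Complex.inv_eq_conj hz,
    pow_sub₀ z hz0 (hs j hj).1, inv_pow]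
  ring

theorem eq_zero_of_add_eq_zero_of_pow_mul_conj {w u v : ℂ} (huv : u + v = 0)
    (hu : w * conj u = u) (hv : w * conj v = -v) : u = 0 ∧ v = 0 := by
  have hsub : u - v = 0 := by
    rw [← hu, sub_eq_add_neg, ← hv, ← mul_add, ← map_add, huv, map_zero, mul_zero]
  exact ⟨by linear_combination (huv + hsub) / 2, by linear_combination (huv - hsub) / 2⟩

theorem reflect_mem_filter_range {n : ℕ} {p : ℕ → Prop} [DecidablePred p]
    (hp : ∀ j ≤ n, p (n - j) ↔ p j) :
    ∀ j ∈ {j ∈ range (n + 1) | p j}, j ≤ n ∧ n - j ∈ {j ∈ range (n + 1) | p j} := by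
  intro j hj
  rw [mem_filter, mem_range_succ_iff] at hj
  exact ⟨hj.1, mem_filter.mpr ⟨mem_range_succ_iff.mpr (n.sub_le j), (hp j hj.1).mpr hj.2⟩⟩

theorem sum_even_eq_zero_and_sum_odd_eq_zero_of_skewReciprocal {z : ℂ} (hz : ‖z‖ = 1) {n : ℕ}
    (hn : Even n) {c : ℕ → ℝ} (hsk : ∀ j ≤ n, c j = (-1) ^ j * c (n - j))
    (hP : ∑ j ∈ range (n + 1), (c j : ℂ) * z ^ j = 0) :
    ∑ j ∈ range (n + 1) with Even j, (c j : ℂ) * z ^ j = 0 ∧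
      ∑ j ∈ range (n + 1) with Odd j, (c j : ℂ) * z ^ j = 0 := by
  have heven : ∀ j ≤ n, Even (n - j) ↔ Even j := fun j hj => by simp [Nat.even_sub hj, hn]
  have hodd : ∀ j ≤ n, Odd (n - j) ↔ Odd j := fun j hj => by
    simp only [← Nat.not_even_iff_odd, heven j hj]
  refine eq_zero_of_add_eq_zero_of_pow_mul_conj (w := z ^ n) ?_ ?_ ?_
  · simpa only [Nat.not_even_iff_odd] using (sum_filter_add_sum_filter_not _ Even _).trans hP
  · rw [pow_mul_conj_sum_of_norm_eq_one hz (reflect_mem_filter_range heven)]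
    refine sum_congr rfl fun j hj => ?_
    obtain ⟨hjn, hj⟩ := mem_filter.mp hj
    rw [Complex.conj_ofReal, hsk j (mem_range_succ_iff.mp hjn), hj.neg_one_pow, one_mul]
  · rw [pow_mul_conj_sum_of_norm_eq_one hz (reflect_mem_filter_range hodd), ← sum_neg_distrib]
    refine sum_congr rfl fun j hj => ?_
    obtain ⟨hjn, hj⟩ := mem_filter.mp hj
    rw [Complex.conj_ofReal, hsk j (mem_range_succ_iff.mp hjn), hj.neg_one_pow]
    push_cast
    ring

theorem isIntegral_of_aeval_eq_zero_of_isUnit_coeff {R S : Type*} [CommRing R] [CommRing S]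
    [Algebra R S] {p : R[X]} {n : ℕ} (hdeg : p.natDegree ≤ n) (hu : IsUnit (p.coeff n)) {z : S}
    (hz : aeval z p = 0) : IsIntegral R z := by
  refine ⟨C ↑hu.unit⁻¹ * p, monic_of_natDegree_le_of_coeff_eq_one n
    ((natDegree_C_mul_le _ _).trans hdeg) (by simp [coeff_C_mul]), ?_⟩
  rw [← aeval_def, map_mul, hz, mul_zero]

theorem not_isCoprime_map_of_aeval_eq_zero {R S K : Type*} [CommRing R] [IsDomain R]
    [IsIntegrallyClosed R] [CommRing S] [IsDomain S] [Algebra R S] [Module.IsTorsionFree R S]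
    [CommRing K] [Nontrivial K] (f : R →+* K) {z : S} (hz : IsIntegral R z) {p q : R[X]}
    (hp : aeval z p = 0) (hq : aeval z q = 0) : ¬IsCoprime (p.map f) (q.map f) := by
  intro hpq
  have hmonic := minpoly.monic hz
  have hunit := hpq.isUnit_of_dvd' (map_dvd f (minpoly.isIntegrallyClosed_dvd hz hp))
    (map_dvd f (minpoly.isIntegrallyClosed_dvd hz hq))
  have hdeg := congrArg natDegree ((hmonic.map f).isUnit_iff.mp hunit)
  rw [hmonic.natDegree_map, natDegree_one] at hdeg
  exact (minpoly.natDegree_pos hz).ne' hdeg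

theorem sum_even_pow_sub_mul_sum_odd_pow {A : Type*} [CommRing A] (x : A) {n : ℕ} (hn : Even n) :
    ∑ j ∈ range (n + 1) with Even j, x ^ j - x * ∑ j ∈ range (n + 1) with Odd j, x ^ j = 1 := by
  obtain ⟨m, rfl⟩ := hn
  simp only [sum_filter]
  induction m with
  | zero => simp
  | succ m ih =>
    rw [show m + 1 + (m + 1) + 1 = m + m + 1 + 1 + 1 by ring, sum_range_succ, sum_range_succ,
      sum_range_succ (fun j => if Odd j then _ else _),
      sum_range_succ (fun j => if Odd j then _ else _)]
    have he : Even (m + m + 1 + 1) := ⟨m + 1, by ring⟩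
    have ho : Odd (m + m + 1) := ⟨m, by ring⟩
    simp only [he, ho, Nat.not_even_iff_odd.mpr ho, Nat.not_odd_iff_even.mpr he, if_true, if_false]
    linear_combination ih

theorem map_sum_C_mul_X_pow_of_odd {s : Finset ℕ} {b : ℕ → ℤ} (hb : ∀ j ∈ s, Odd (b j)) :
    (∑ j ∈ s, C (b j) * X ^ j).map (Int.castRingHom (ZMod 2)) = ∑ j ∈ s, X ^ j := by
  simp only [Polynomial.map_sum, Polynomial.map_mul, Polynomial.map_pow, map_C, map_X]
  refine sum_congr rfl fun j hj => ?_
  rw [eq_intCast, ZMod.intCast_eq_one_iff_odd.mpr (hb j hj), map_one, one_mul]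

theorem not_sum_even_eq_zero_and_sum_odd_eq_zero {S : Type*} [CommRing S] [IsDomain S]
    [CharZero S] {n : ℕ} (hn : Even n) {b : ℕ → ℤ} (hb : ∀ j ≤ n, Odd (b j))
    (hlead : IsUnit (b n)) (z : S) :
    ¬(∑ j ∈ range (n + 1) with Even j, (b j : S) * z ^ j = 0 ∧
      ∑ j ∈ range (n + 1) with Odd j, (b j : S) * z ^ j = 0) := by
  rintro ⟨hE, hO⟩
  set E := ∑ j ∈ range (n + 1) with Even j, C (b j) * X ^ j
  have haeval : ∀ s : Finset ℕ, aeval z (∑ j ∈ s, C (b j) * X ^ j) = ∑ j ∈ s, (b j : S) * z ^ j :=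
    fun s => by simp
  have hdeg : E.natDegree ≤ n := natDegree_sum_le_of_forall_le _ _ fun j hj =>
    (natDegree_C_mul_X_pow_le _ _).trans (mem_range_succ_iff.mp (mem_filter.mp hj).1)
  have hcoeff : E.coeff n = b n := by simp [E, hn]
  have hz : IsIntegral ℤ z :=
    isIntegral_of_aeval_eq_zero_of_isUnit_coeff hdeg (hcoeff ▸ hlead) (haeval _ ▸ hE)
  refine not_isCoprime_map_of_aeval_eq_zero (Int.castRingHom (ZMod 2)) hz (haeval _ ▸ hE)
    (haeval _ ▸ hO) ?_
  have hodd : ∀ p : ℕ → Prop, [DecidablePred p] → ∀ j ∈ {j ∈ range (n + 1) | p j}, Odd (b j) :=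
    fun p _ j hj => hb j (mem_range_succ_iff.mp (mem_filter.mp hj).1)
  rw [map_sum_C_mul_X_pow_of_odd (hodd _), map_sum_C_mul_X_pow_of_odd (hodd _)]
  exact ⟨1, -X, by linear_combination sum_even_pow_sub_mul_sum_odd_pow (X : (ZMod 2)[X]) hn⟩

/-- A skew-reciprocal Littlewood polynomial has no zeros on the unit circle. -/
theorem skewReciprocal_littlewood_no_unimodular_zero
    (n : ℕ) (a : ℕ → ℝ)
    (ha : ∀ j ≤ n, a j = 1 ∨ a j = -1)
    (hsk : ∀ j ≤ n, a j = (-1) ^ j * a (n - j)) :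
    ∀ z : ℂ, ‖z‖ = 1 → ∑ j ∈ Finset.range (n + 1), (a j : ℂ) * z ^ j ≠ 0 := by
  intro z hz hP
  set b : ℕ → ℤ := fun j => round (a j)
  have hab : ∀ j ≤ n, a j = b j ∧ (b j = 1 ∨ b j = -1) := fun j hj => by
    rcases ha j hj with h | h <;> norm_num [b, h, round_eq]
  have hn : Even n := even_of_skewReciprocal (by rcases ha n le_rfl with h | h <;> simp [h]) hsk
  have hsplit := sum_even_eq_zero_and_sum_odd_eq_zero_of_skewReciprocal hz hn hsk hP
  refine not_sum_even_eq_zero_and_sum_odd_eq_zero hn (b := b) (fun j hj => ?_) ?_ z ?_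
  · rcases (hab j hj).2 with h | h <;> simp [h]
  · rcases (hab n le_rfl).2 with h | h <;> simp [h]
  · have hcast : ∀ p : ℕ → Prop, [DecidablePred p] →
        ∑ j ∈ range (n + 1) with p j, (a j : ℂ) * z ^ j =
          ∑ j ∈ range (n + 1) with p j, (b j : ℂ) * z ^ j := fun p _ =>
      sum_congr rfl fun j hj => by
        simp [(hab j (mem_range_succ_iff.mp (mem_filter.mp hj).1)).1]
    simpa only [hcast] using hsplit
end

section
/- For each n ≥ 1, the trigonometric polynomial T_n(t) := cos t + cos((4n+1)t) + Σ_{k=0}^{n-1} (cos((4k+1)t) − cos((4k+3)t)) satisfies the identity T_n(t) = (1 + cos((4n+2)t)) / (2 cos t) + cos t for all t with cos t ≠ 0. -/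
lemma counterexample_aux (t : ℝ) (ht : Real.cos t ≠ 0) (n : ℕ) :
    Real.cos t + Real.cos ((4 * n + 1) * t) +
      ∑ k ∈ Finset.range n,
        (Real.cos ((4 * k + 1) * t) - Real.cos ((4 * k + 3) * t))
    = (1 + Real.cos ((4 * n + 2) * t)) / (2 * Real.cos t) + Real.cos t := by
  induction n with
  | zero =>
      simp only [Nat.cast_zero, Finset.range_zero, Finset.sum_empty, mul_zero, zero_add,
        one_mul, add_zero]
      rw [show (2 : ℝ) * t = t + t by ring, Real.cos_add]
      have hs := Real.sin_sq_add_cos_sq t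
      field_simp
      nlinarith [hs]
  | succ n ih =>
      rw [Finset.sum_range_succ]
      push_cast at ih ⊢
      have key : Real.cos ((4 * (n:ℝ) + 5) * t) - Real.cos ((4 * n + 3) * t)
          = (Real.cos ((4 * n + 6) * t) - Real.cos ((4 * n + 2) * t)) / (2 * Real.cos t) := by
        have h1 : Real.cos ((4 * (n:ℝ) + 5) * t) - Real.cos ((4 * n + 3) * t)
            = -2 * Real.sin ((4 * n + 4) * t) * Real.sin t := by
          rw [Real.cos_sub_cos]
          ring_nf
        have h2 : Real.cos ((4 * (n:ℝ) + 6) * t) - Real.cos ((4 * n + 2) * t)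
            = -2 * Real.sin ((4 * n + 4) * t) * Real.sin (2 * t) := by
          rw [Real.cos_sub_cos]
          ring_nf
        rw [h1, h2, Real.sin_two_mul]
        field_simp
      have e5 : (4 * ((n:ℝ) + 1) + 1) * t = (4 * n + 5) * t := by ring
      have e6 : (4 * ((n:ℝ) + 1) + 2) * t = (4 * n + 6) * t := by ring
      rw [e5, e6]
      field_simp at ih key ⊢
      linarith [ih, key]

/-- The identity satisfied by the counterexample trigonometric polynomial `T_n`. -/
theorem counterexample_identity (n : ℕ) (hn : 1 ≤ n) (t : ℝ) (ht : Real.cos t ≠ 0) :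
    Real.cos t + Real.cos ((4 * n + 1) * t) +
      ∑ k ∈ Finset.range n,
        (Real.cos ((4 * k + 1) * t) - Real.cos ((4 * k + 3) * t))
    = (1 + Real.cos ((4 * n + 2) * t)) / (2 * Real.cos t) + Real.cos t := by
  exact counterexample_aux t ht n
end

section
/- For each n ≥ 1, the trigonometric polynomial T_n(t) := cos t + cos((4n+1)t) + Σ_{k=0}^{n-1} (cos((4k+1)t) − cos((4k+3)t)) has exactly two zeros in the period [−π, π), namely simple zeros at t = −π/2 and t = π/2, and T_n(t) ≠ 0 for all other t in [−π, π). -/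
/-!
Multiplying by `cos t` telescopes the sum: `cos t * T_n t = cos t ^ 2 + cos ((2n+1) t) ^ 2`.
Hence a zero of `T_n` is a zero of `cos`, i.e. `±π/2` in `[-π, π)`, where every odd harmonic
vanishes. At `π/2` the sines of the odd harmonics are `±1`, which gives
`T_n'(π/2) = -((2n+1)^2 + 1)`; as `T_n` is even, `T_n'(-π/2) = (2n+1)^2 + 1`.
-/

open Real Finset

lemma Function.Even.deriv_neg {f : ℝ → ℝ} (hf : f.Even) (x : ℝ) :
    deriv f (-x) = -deriv f x := by
  have h := deriv_comp_neg (f := f) (x := x)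
  rw [funext hf] at h
  rw [h, neg_neg]

lemma hasDerivAt_cos_const_mul (c x : ℝ) :
    HasDerivAt (fun t => cos (c * t)) (-(c * sin (c * x))) x := by
  simpa [mul_comm] using ((hasDerivAt_id x).const_mul c).cos

lemma eq_neg_pi_div_two_or_eq_pi_div_two_of_cos_eq_zero {t : ℝ} (ht : t ∈ Set.Ico (-π) π)
    (hcos : cos t = 0) : t = -(π / 2) ∨ t = π / 2 := by
  obtain ⟨k, rfl⟩ := cos_eq_zero_iff.mp hcos
  obtain ⟨hlo, hhi⟩ := ht
  have hk_lo : (-2 : ℤ) ≤ 2 * k + 1 := by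
    have : (-2 : ℝ) ≤ 2 * k + 1 := by nlinarith [pi_pos]
    exact_mod_cast this
  have hk_hi : 2 * k + 1 < (2 : ℤ) := by
    have : (2 * k + 1 : ℝ) < 2 := by nlinarith [pi_pos]
    exact_mod_cast this
  obtain rfl | rfl : k = -1 ∨ k = 0 := by omega
  · left; push_cast; ring
  · right; push_cast; ring

lemma sum_range_eight_mul_add_four (n : ℕ) : ∑ k ∈ range n, (8 * (k : ℝ) + 4) = 4 * n ^ 2 := by
  induction n with
  | zero => simp
  | succ n ih => rw [sum_range_succ, ih]; push_cast; ring

section OddHarmonics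

variable (k : ℕ)

lemma four_mul_add_one_mul_pi_div_two :
    (4 * k + 1) * (π / 2) = π / 2 + k * (2 * π) := by ring

lemma four_mul_add_three_mul_pi_div_two :
    (4 * k + 3) * (π / 2) = (4 * k + 1) * (π / 2) + π := by ring

lemma cos_four_mul_add_one_mul_pi_div_two : cos ((4 * k + 1) * (π / 2)) = 0 := by
  rw [four_mul_add_one_mul_pi_div_two, cos_add_nat_mul_two_pi, cos_pi_div_two]

lemma sin_four_mul_add_one_mul_pi_div_two : sin ((4 * k + 1) * (π / 2)) = 1 := by
  rw [four_mul_add_one_mul_pi_div_two, sin_add_nat_mul_two_pi, sin_pi_div_two]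

lemma cos_four_mul_add_three_mul_pi_div_two : cos ((4 * k + 3) * (π / 2)) = 0 := by
  rw [four_mul_add_three_mul_pi_div_two, cos_add_pi, cos_four_mul_add_one_mul_pi_div_two, neg_zero]

lemma sin_four_mul_add_three_mul_pi_div_two : sin ((4 * k + 3) * (π / 2)) = -1 := by
  rw [four_mul_add_three_mul_pi_div_two, sin_add_pi, sin_four_mul_add_one_mul_pi_div_two]

end OddHarmonics

noncomputable def trigPoly (n : ℕ) (t : ℝ) : ℝ :=
  cos t + cos ((4 * n + 1) * t) + ∑ k ∈ range n, (cos ((4 * k + 1) * t) - cos ((4 * k + 3) * t))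

lemma two_mul_cos_mul_sum_range (n : ℕ) (t : ℝ) :
    2 * cos t * ∑ k ∈ range n, (cos ((4 * k + 1) * t) - cos ((4 * k + 3) * t))
      = 1 - cos (4 * n * t) := by
  have hterm (k : ℕ) : 2 * cos t * (cos ((4 * k + 1) * t) - cos ((4 * k + 3) * t))
      = cos (4 * k * t) - cos (4 * ↑(k + 1) * t) := by
    have h1 := two_mul_cos_mul_cos ((4 * k + 1) * t) t
    have h3 := two_mul_cos_mul_cos ((4 * k + 3) * t) t
    rw [show (4 * (k : ℝ) + 1) * t - t = 4 * k * t by ring] at h1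
    rw [show (4 * (k : ℝ) + 3) * t + t = 4 * ↑(k + 1) * t by push_cast; ring,
      show (4 * (k : ℝ) + 3) * t - t = (4 * k + 1) * t + t by ring] at h3
    linear_combination h1 - h3
  rw [mul_sum, sum_congr rfl fun k _ => hterm k, sum_range_sub' (fun k : ℕ => cos (4 * k * t))]
  simp

lemma cos_mul_trigPoly (n : ℕ) (t : ℝ) :
    cos t * trigPoly n t = cos t ^ 2 + cos ((2 * n + 1) * t) ^ 2 := by
  have hsum := two_mul_cos_mul_sum_range n t
  have hlast := two_mul_cos_mul_cos ((4 * n + 1) * t) t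
  have hsq := cos_sq ((2 * n + 1) * t)
  rw [show (4 * (n : ℝ) + 1) * t - t = 4 * n * t by ring] at hlast
  rw [show 2 * ((2 * (n : ℝ) + 1) * t) = (4 * n + 1) * t + t by ring] at hsq
  unfold trigPoly
  linear_combination hsum / 2 + hlast / 2 - hsq

lemma cos_eq_zero_of_trigPoly_eq_zero {n : ℕ} {t : ℝ} (h : trigPoly n t = 0) : cos t = 0 := by
  have hsq := cos_mul_trigPoly n t
  rw [h, mul_zero] at hsq
  nlinarith [sq_nonneg (cos t), sq_nonneg (cos ((2 * n + 1) * t))]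

lemma trigPoly_even (n : ℕ) : (trigPoly n).Even := fun t => by
  simp only [trigPoly, mul_neg, cos_neg]

lemma trigPoly_pi_div_two (n : ℕ) : trigPoly n (π / 2) = 0 := by
  simp [trigPoly, cos_four_mul_add_one_mul_pi_div_two, cos_four_mul_add_three_mul_pi_div_two]

lemma hasDerivAt_trigPoly (n : ℕ) (t : ℝ) :
    HasDerivAt (trigPoly n)
      (-sin t - (4 * n + 1) * sin ((4 * n + 1) * t) -
        ∑ k ∈ range n, ((4 * k + 1) * sin ((4 * k + 1) * t) - (4 * k + 3) * sin ((4 * k + 3) * t)))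
      t := by
  have h := ((hasDerivAt_cos t).add (hasDerivAt_cos_const_mul (4 * n + 1) t)).add
    (HasDerivAt.fun_sum (u := range n) fun k _ => (hasDerivAt_cos_const_mul (4 * k + 1) t).sub
      (hasDerivAt_cos_const_mul (4 * k + 3) t))
  refine HasDerivAt.congr_deriv (f := trigPoly n) h ?_
  rw [sub_eq_add_neg _ (∑ _ ∈ _, _), ← sum_neg_distrib]
  exact congrArg₂ (· + ·) (by ring) (sum_congr rfl fun _ _ => by ring)

lemma deriv_trigPoly_pi_div_two (n : ℕ) :
    deriv (trigPoly n) (π / 2) = -((2 * n + 1) ^ 2 + 1) := by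
  rw [(hasDerivAt_trigPoly n _).deriv, sin_pi_div_two, sin_four_mul_add_one_mul_pi_div_two]
  simp only [sin_four_mul_add_one_mul_pi_div_two, sin_four_mul_add_three_mul_pi_div_two]
  rw [sum_congr rfl fun (k : ℕ) _ => show (4 * (k : ℝ) + 1) * 1 - (4 * k + 3) * -1 = 8 * k + 4 by ring,
    sum_range_eight_mul_add_four]
  ring

theorem counterexample_two_simple_zeros_general (n : ℕ) :
    let T : ℝ → ℝ := fun t =>
      Real.cos t + Real.cos ((4 * n + 1) * t) +
        ∑ k ∈ Finset.range n,
          (Real.cos ((4 * k + 1) * t) - Real.cos ((4 * k + 3) * t))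
    T (-(Real.pi / 2)) = 0 ∧ T (Real.pi / 2) = 0 ∧
      deriv T (-(Real.pi / 2)) ≠ 0 ∧ deriv T (Real.pi / 2) ≠ 0 ∧
      ∀ t ∈ Set.Ico (-Real.pi) Real.pi, T t = 0 → t = -(Real.pi / 2) ∨ t = Real.pi / 2 := by
  intro T
  have hpos : (0 : ℝ) < (2 * n + 1) ^ 2 + 1 := by positivity
  refine ⟨(trigPoly_even n _).trans (trigPoly_pi_div_two n), trigPoly_pi_div_two n, ?_, ?_,
    fun t ht hT => eq_neg_pi_div_two_or_eq_pi_div_two_of_cos_eq_zero ht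
      (cos_eq_zero_of_trigPoly_eq_zero hT)⟩
  · show deriv (trigPoly n) (-(π / 2)) ≠ 0
    rw [(trigPoly_even n).deriv_neg, deriv_trigPoly_pi_div_two, neg_neg]
    exact hpos.ne'
  · show deriv (trigPoly n) (π / 2) ≠ 0
    rw [deriv_trigPoly_pi_div_two]
    exact neg_ne_zero.mpr hpos.ne'

/-- The trigonometric polynomial `T_n` has exactly two zeros `±π/2` in `[-π, π)`,
both of which are simple. -/
theorem counterexample_two_simple_zeros (n : ℕ) (hn : 1 ≤ n) :
    let T : ℝ → ℝ := fun t =>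
      Real.cos t + Real.cos ((4 * n + 1) * t) +
        ∑ k ∈ Finset.range n,
          (Real.cos ((4 * k + 1) * t) - Real.cos ((4 * k + 3) * t))
    T (-(Real.pi / 2)) = 0 ∧ T (Real.pi / 2) = 0 ∧
      deriv T (-(Real.pi / 2)) ≠ 0 ∧ deriv T (Real.pi / 2) ≠ 0 ∧
      ∀ t ∈ Set.Ico (-Real.pi) Real.pi, T t = 0 → t = -(Real.pi / 2) ∨ t = Real.pi / 2 :=
  counterexample_two_simple_zeros_general n
end

section
/- Let λ_0 < λ_1 < ⋯ < λ_m be nonnegative integers, Q(t) = Σ_{j=0}^m A_j cos(λ_j t) with real coefficients, and A := max_j |A_j|. If Q has at most K−1 zeros in the period [−π, π), then ∫_{−π}^{π} |Q(t)| dt ≤ 2KA(π + Σ_{j=1}^m 1/λ_j). -/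
/-!
Between consecutive zeros `Q` has constant sign, so on such a piece `∫ |Q| = |∫ Q|`. Integrating
term by term, `|∫ₛᵗ Q| ≤ A (t - s) + 2A ∑_{j ≥ 1} 1/λ_j`: the term of frequency `λ₀` contributes at
most `A (t - s)` and every other term at most `2A/λ_j`. At most `K - 1` zeros cut `(-π, π)` into at
most `K` pieces, which gives the bound. If `Q` has infinitely many zeros in `[-π, π)`, it vanishes
identically, being real-analytic.
-/

open Real Set MeasureTheory intervalIntegral

lemma integral_abs_eq_abs_integral_of_forall_ne_zero {f : ℝ → ℝ} {a b : ℝ} (hab : a ≤ b)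
    (hf : ContinuousOn f (Ioo a b)) (h0 : ∀ x ∈ Ioo a b, f x ≠ 0) :
    ∫ x in a..b, |f x| = |∫ x in a..b, f x| := by
  have hsign : (∀ x ∈ Ioo a b, 0 < f x) ∨ (∀ x ∈ Ioo a b, f x < 0) := by
    by_contra! ⟨⟨u, hu, hfu⟩, ⟨v, hv, hfv⟩⟩
    obtain ⟨w, hw, hfw⟩ := isPreconnected_Ioo.intermediate_value hu hv hf ⟨hfu, hfv⟩
    exact h0 w hw hfw
  simp only [integral_of_le hab, integral_Ioc_eq_integral_Ioo]
  rcases hsign with hpos | hneg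
  · rw [setIntegral_congr_fun measurableSet_Ioo fun x hx ↦ abs_of_pos (hpos x hx),
      abs_of_nonneg (setIntegral_nonneg measurableSet_Ioo fun x hx ↦ (hpos x hx).le)]
  · rw [setIntegral_congr_fun measurableSet_Ioo fun x hx ↦ abs_of_neg (hneg x hx),
      MeasureTheory.integral_neg,
      abs_of_nonpos (setIntegral_nonpos measurableSet_Ioo fun x hx ↦ (hneg x hx).le)]

/-- Induction on `Z` from its largest element: beyond the largest zero in `(a, b)`, `f` has
constant sign. -/
lemma integral_abs_le_of_zeros_subset {f : ℝ → ℝ} (hf : Continuous f) {c D : ℝ} (hD : 0 ≤ D)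
    (H : ∀ s t, s ≤ t → |∫ x in s..t, f x| ≤ c * (t - s) + D) (Z : Finset ℝ) {a b : ℝ}
    (hab : a ≤ b) (hZ : ∀ x ∈ Ioo a b, f x = 0 → x ∈ Z) :
    ∫ x in a..b, |f x| ≤ c * (b - a) + (Z.card + 1) * D := by
  induction Z using Finset.induction_on_max generalizing b with
  | empty =>
    rw [integral_abs_eq_abs_integral_of_forall_ne_zero hab hf.continuousOn
      fun x hx hfx ↦ Finset.notMem_empty x (hZ x hx hfx)]
    simpa using H a b hab
  | insert z Z hzZ ih =>
    have hcard : ((insert z Z).card : ℝ) = Z.card + 1 := by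
      rw [Finset.card_insert_of_notMem fun h ↦ (hzZ z h).false, Nat.cast_succ]
    rw [hcard]
    by_cases hz : z ∈ Ioo a b
    · have hleft : ∫ x in a..z, |f x| ≤ c * (z - a) + (Z.card + 1) * D := by
        refine ih hz.1.le fun x hx hfx ↦ ?_
        exact (Finset.mem_insert.1 (hZ x ⟨hx.1, hx.2.trans hz.2⟩ hfx)).resolve_left hx.2.ne
      have hright : ∫ x in z..b, |f x| ≤ c * (b - z) + D := by
        rw [integral_abs_eq_abs_integral_of_forall_ne_zero hz.2.le hf.continuousOn]
        · exact H z b hz.2.le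
        intro x hx hfx
        rcases Finset.mem_insert.1 (hZ x ⟨hz.1.trans hx.1, hx.2⟩ hfx) with rfl | hxZ
        · exact lt_irrefl _ hx.1
        · exact (hzZ x hxZ).not_gt hx.1
      rw [← integral_add_adjacent_intervals (hf.abs.intervalIntegrable a z)
        (hf.abs.intervalIntegrable z b)]
      linarith
    · have := ih hab fun x hx hfx ↦
        (Finset.mem_insert.1 (hZ x hx hfx)).resolve_left fun h ↦ hz (h ▸ hx)
      linarith

lemma abs_integral_cos_mul_le_sub (ω : ℝ) {s t : ℝ} (hst : s ≤ t) :
    |∫ x in s..t, cos (ω * x)| ≤ t - s := by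
  simpa [abs_of_nonneg (sub_nonneg.2 hst)] using
    norm_integral_le_of_norm_le_const (a := s) (b := t) (f := fun x ↦ cos (ω * x)) (C := 1)
      fun x _ ↦ abs_cos_le_one (ω * x)

lemma abs_integral_cos_mul_le_two_div {ω : ℝ} (hω : 0 < ω) (s t : ℝ) :
    |∫ x in s..t, cos (ω * x)| ≤ 2 / ω := by
  rw [integral_comp_mul_left _ hω.ne', integral_cos, smul_eq_mul, abs_mul, abs_inv,
    abs_of_pos hω, inv_mul_eq_div]
  gcongr
  calc |sin (ω * t) - sin (ω * s)| ≤ |sin (ω * t)| + |sin (ω * s)| := abs_sub _ _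
    _ ≤ 2 := by linarith [abs_sin_le_one (ω * t), abs_sin_le_one (ω * s)]

lemma abs_integral_sum_cos_le {ι : Type*} [Fintype ι] [DecidableEq ι] (i₀ : ι) {ω : ι → ℝ}
    (hω : ∀ j ≠ i₀, 0 < ω j) {A : ι → ℝ} {Amax : ℝ} (hA : ∀ j, |A j| ≤ Amax) {s t : ℝ}
    (hst : s ≤ t) :
    |∫ x in s..t, ∑ j, A j * cos (ω j * x)| ≤
      Amax * (t - s) + 2 * Amax * ∑ j ∈ Finset.univ.filter (· ≠ i₀), 1 / ω j := by
  have hAmax : 0 ≤ Amax := (abs_nonneg _).trans (hA i₀)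
  have hterm (j : ι) :
      |∫ x in s..t, A j * cos (ω j * x)| ≤ Amax * |∫ x in s..t, cos (ω j * x)| := by
    rw [intervalIntegral.integral_const_mul, abs_mul]
    exact mul_le_mul_of_nonneg_right (hA j) (abs_nonneg _)
  rw [intervalIntegral.integral_finsetSum fun j _ ↦
      (by fun_prop : Continuous fun x ↦ A j * cos (ω j * x)).intervalIntegrable s t,
    Finset.filter_ne', Finset.mul_sum]
  calc |∑ j, ∫ x in s..t, A j * cos (ω j * x)|
      ≤ ∑ j, |∫ x in s..t, A j * cos (ω j * x)| := Finset.abs_sum_le_sum_abs _ _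
    _ = |∫ x in s..t, A i₀ * cos (ω i₀ * x)| +
          ∑ j ∈ Finset.univ.erase i₀, |∫ x in s..t, A j * cos (ω j * x)| :=
        (Finset.add_sum_erase _ _ (Finset.mem_univ i₀)).symm
    _ ≤ Amax * (t - s) + ∑ j ∈ Finset.univ.erase i₀, 2 * Amax * (1 / ω j) := by
        gcongr with j hj
        · exact (hterm i₀).trans
            (mul_le_mul_of_nonneg_left (abs_integral_cos_mul_le_sub _ hst) hAmax)
        · refine (hterm j).trans ?_
          have := abs_integral_cos_mul_le_two_div (hω j (Finset.ne_of_mem_erase hj)) s t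
          rw [mul_one_div, mul_comm 2 Amax, mul_div_assoc]
          exact mul_le_mul_of_nonneg_left this hAmax

theorem AnalyticOnNhd.eqOn_zero_of_infinite_zeros_of_isCompact {𝕜 E : Type*}
    [NontriviallyNormedField 𝕜] [NormedAddCommGroup E] [NormedSpace 𝕜 E] {f : 𝕜 → E}
    {U K : Set 𝕜} (hf : AnalyticOnNhd 𝕜 f U) (hU : IsPreconnected U) (hK : IsCompact K)
    (hKU : K ⊆ U) (hzeros : {x ∈ K | f x = 0}.Infinite) : EqOn f 0 U := by
  obtain ⟨x, hxK, hx⟩ := hzeros.exists_accPt_of_subset_isCompact hK (sep_subset _ _)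
  refine hf.eqOn_zero_of_preconnected_of_frequently_eq_zero hU (hKU hxK) ?_
  rw [accPt_iff_frequently] at hx
  exact frequently_nhdsWithin_iff.2 (hx.mono fun y hy ↦ ⟨hy.2.2, hy.1⟩)

/-- If the cosine polynomial `Q` has at most `K - 1` zeros in the period `[-π, π)`, then
its `L¹` norm is at most `2KA(π + Σ_{j=1}^m 1/λ_j)`. -/
theorem cosine_few_zeros_upper_bound (m : ℕ) (lam : Fin (m + 1) → ℕ)
    (hmono : StrictMono lam) (A : Fin (m + 1) → ℝ) (Amax : ℝ)
    (hA : ∀ j, |A j| ≤ Amax) (K : ℕ) (hK : 1 ≤ K)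
    (hz : ({t ∈ Set.Ico (-Real.pi) Real.pi |
        ∑ j : Fin (m + 1), A j * Real.cos ((lam j : ℝ) * t) = 0}).ncard ≤ K - 1) :
    ∫ t in (-Real.pi)..Real.pi, |∑ j : Fin (m + 1), A j * Real.cos ((lam j : ℝ) * t)| ≤
      2 * K * Amax *
        (Real.pi + ∑ j ∈ Finset.univ.filter (fun j : Fin (m + 1) => j ≠ 0), 1 / (lam j : ℝ)) := by
  set Q : ℝ → ℝ := fun t ↦ ∑ j : Fin (m + 1), A j * cos ((lam j : ℝ) * t)
  set S := ∑ j ∈ Finset.univ.filter (fun j : Fin (m + 1) => j ≠ 0), 1 / (lam j : ℝ)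
  have hAmax : 0 ≤ Amax := (abs_nonneg _).trans (hA 0)
  have hS : 0 ≤ S := Finset.sum_nonneg fun j _ ↦ by positivity
  have hlam (j : Fin (m + 1)) (hj : j ≠ 0) : (0 : ℝ) < lam j :=
    Nat.cast_pos.2 ((Nat.zero_le _).trans_lt (hmono (Fin.pos_of_ne_zero hj)))
  rcases {t ∈ Ico (-π) π | Q t = 0}.finite_or_infinite with hfin | hinf
  · have hcard : (hfin.toFinset.card : ℝ) + 1 ≤ K := by
      have hz : {t ∈ Ico (-π) π | Q t = 0}.ncard ≤ K - 1 := hz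
      rw [← Set.ncard_eq_toFinset_card _ hfin]; exact_mod_cast (by omega : _ + 1 ≤ K)
    have hbound := integral_abs_le_of_zeros_subset (by fun_prop) (by positivity)
      (fun s t hst ↦ abs_integral_sum_cos_le 0 hlam hA hst) hfin.toFinset
      (by linarith [pi_pos] : -π ≤ π)
      fun x hx hQx ↦ hfin.mem_toFinset.2 ⟨Ioo_subset_Ico_self hx, hQx⟩
    calc _ ≤ Amax * (π - -π) + K * (2 * Amax * S) := by
          refine hbound.trans ?_; gcongr
      _ ≤ 2 * K * Amax * (π + S) := by
          nlinarith [mul_nonneg (mul_nonneg hAmax pi_pos.le) (sub_nonneg.2 (Nat.one_le_cast.2 hK))]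
  · have hQ : AnalyticOnNhd ℝ Q univ := fun x _ ↦ by fun_prop
    have hQ0 (t : ℝ) : ∑ j : Fin (m + 1), A j * cos ((lam j : ℝ) * t) = 0 :=
      hQ.eqOn_zero_of_infinite_zeros_of_isCompact isPreconnected_univ isCompact_Icc (subset_univ _)
      (hinf.mono fun x hx ↦ ⟨Ico_subset_Icc_self hx.1, hx.2⟩) (mem_univ t)
    simp only [hQ0, abs_zero, intervalIntegral.integral_zero]
    positivity
end

section
/- Let R be a continuously differentiable real function on [−δ, δ] with δ > 0, let L := ∫_{−δ}^{δ} |R′(x)| dx and M := max_{x∈[−δ,δ]} |R(x)|, with M > 0. Then there exists η ∈ [−M, M] such that R − η has at least L/(2M) zeros in [−δ, δ]. -/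
open MeasureTheory Set Filter Topology intervalIntegral

/-!
For a partition `u₀ ≤ ⋯ ≤ u_k` of `[-δ, δ]`, a level `η` that is not one of the values `R uᵢ` lies
between `R uᵢ` and `R uᵢ₊₁` for at most `#(R⁻¹ η)` indices `i`: by the intermediate value theorem
each such cell contains its own root of `R - η`. Integrating this count over `η ∈ [-M, M]` bounds
`∑ |R uᵢ₊₁ - R uᵢ|`, hence the variation of `R`, by `2M · sup_η #(R⁻¹ η)`, and for a `C¹` function
the variation dominates `∫ |R'|` (use fine uniform partitions). Since `Set.ncard` is `0` on infinite
sets, we also need that almost every level set is finite: an infinite level set accumulates at a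
critical point, and the critical values are null by Sard's lemma.
-/

theorem Real.volume_image_eq_zero_of_hasDerivWithinAt_eq_zero {f f' : ℝ → ℝ} {s : Set ℝ}
    (hf : ∀ x ∈ s, HasDerivWithinAt f (f' x) s x) (hf' : ∀ x ∈ s, f' x = 0) :
    volume (f '' s) = 0 := by
  refine addHaar_image_eq_zero_of_det_fderivWithin_eq_zero volume
    (fun x hx ↦ (hf x hx).hasFDerivWithinAt) fun x hx ↦ ?_
  rw [hf' x hx, ContinuousLinearMap.toSpanSingleton_zero]
  exact LinearMap.det_zero' (Module.Basis.singleton Unit ℝ)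

theorem HasDerivAt.eq_and_eq_zero_of_accPt {f : ℝ → ℝ} {f' x η : ℝ} {s : Set ℝ}
    (hf : HasDerivAt f f' x) (hs : ∀ y ∈ s, f y = η) (hx : AccPt x (𝓟 s)) :
    f x = η ∧ f' = 0 := by
  have : (𝓝[≠] x ⊓ 𝓟 s).NeBot := hx
  have hlevel : ∀ᶠ y in 𝓝[≠] x ⊓ 𝓟 s, f y = η := mem_inf_of_right hs
  have hfx : f x = η :=
    tendsto_nhds_unique ((hf.continuousAt.tendsto.mono_left nhdsWithin_le_nhds).mono_left
      inf_le_left) (tendsto_const_nhds.congr' (hlevel.mono fun _ hy ↦ hy.symm))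
  refine ⟨hfx, tendsto_nhds_unique ((hasDerivAt_iff_tendsto_slope.mp hf).mono_left inf_le_left)
    (tendsto_const_nhds.congr' (hlevel.mono fun y hy ↦ ?_))⟩
  simp [slope, hy, hfx]

theorem finite_levelSet_of_notMem_image_deriv_eq_zero {f f' : ℝ → ℝ} {K : Set ℝ}
    (hK : IsCompact K) (hf : ∀ x ∈ K, HasDerivAt f (f' x) x) {η : ℝ}
    (hη : η ∉ f '' {x ∈ K | f' x = 0}) : {x ∈ K | f x = η}.Finite := by
  by_contra hinf
  obtain ⟨x, hxK, hx⟩ := Set.Infinite.exists_accPt_of_subset_isCompact hinf hK fun _ hy ↦ hy.1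
  obtain ⟨hfx, hf'x⟩ := (hf x hxK).eq_and_eq_zero_of_accPt (fun _ hy ↦ hy.2) hx
  exact hη ⟨x, ⟨hxK, hf'x⟩, hfx⟩

theorem ae_finite_levelSet {f f' : ℝ → ℝ} {K : Set ℝ} (hK : IsCompact K)
    (hf : ∀ x ∈ K, HasDerivAt f (f' x) x) : ∀ᵐ η, {x ∈ K | f x = η}.Finite :=
  measure_mono_null
    (fun _ ↦ not_imp_comm.mp (finite_levelSet_of_notMem_image_deriv_eq_zero hK hf))
    (Real.volume_image_eq_zero_of_hasDerivWithinAt_eq_zero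
      (fun x hx ↦ (hf x hx.1).hasDerivWithinAt) fun _ hx ↦ hx.2)

theorem integral_abs_le_abs_integral_add_of_abs_sub_le {f : ℝ → ℝ} {a b c ε : ℝ} (hab : a ≤ b)
    (hf : IntervalIntegrable f volume a b) (hfc : ∀ x ∈ Icc a b, |f x - c| ≤ ε) :
    ∫ x in a..b, |f x| ≤ |∫ x in a..b, f x| + 2 * ε * (b - a) := by
  have habs : ∫ x in a..b, |f x| ≤ (|c| + ε) * (b - a) := by
    have := integral_mono_on hab hf.abs (intervalIntegrable_const (c := |c| + ε)) fun x hx ↦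
      by linarith [abs_sub_abs_le_abs_sub (f x) c, hfc x hx]
    rwa [intervalIntegral.integral_const, smul_eq_mul, mul_comm] at this
  have hdev : |(∫ x in a..b, f x) - (b - a) * c| ≤ ε * (b - a) := by
    have := norm_integral_le_of_norm_le_const (a := a) (b := b) (f := fun x ↦ f x - c) (C := ε)
      fun x hx ↦ hfc x (Ioc_subset_Icc_self (uIoc_of_le hab ▸ hx))
    rwa [integral_sub hf intervalIntegrable_const, intervalIntegral.integral_const, smul_eq_mul,
      abs_of_nonneg (sub_nonneg.mpr hab)] at this
  have hc : |(b - a) * c| = (b - a) * |c| := by rw [abs_mul, abs_of_nonneg (sub_nonneg.mpr hab)]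
  have := abs_sub_abs_le_abs_sub ((b - a) * c) (∫ x in a..b, f x)
  rw [abs_sub_comm] at this
  linarith

theorem integral_abs_deriv_le_sum_abs_sub_add {f f' : ℝ → ℝ} {u : ℕ → ℝ} {k : ℕ} {ε : ℝ}
    (hu : Monotone u) (hf : ∀ x ∈ Icc (u 0) (u k), HasDerivAt f (f' x) x)
    (hf' : ContinuousOn f' (Icc (u 0) (u k)))
    (hosc : ∀ i < k, ∀ x ∈ Icc (u i) (u (i + 1)), |f' x - f' (u i)| ≤ ε) :
    ∫ x in u 0..u k, |f' x| ≤
      ∑ i ∈ Finset.range k, |f (u (i + 1)) - f (u i)| + 2 * ε * (u k - u 0) := by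
  have hcell : ∀ i < k, Icc (u i) (u (i + 1)) ⊆ Icc (u 0) (u k) := fun i hi ↦
    Icc_subset_Icc (hu (Nat.zero_le _)) (hu hi)
  have hint : ∀ i < k, IntervalIntegrable f' volume (u i) (u (i + 1)) := fun i hi ↦
    (hf'.mono (hcell i hi)).intervalIntegrable_of_Icc (hu i.le_succ)
  rw [← sum_integral_adjacent_intervals fun i hi ↦ (hint i hi).abs, ← Finset.sum_range_sub u,
    Finset.mul_sum, ← Finset.sum_add_distrib]
  refine Finset.sum_le_sum fun i hi ↦ ?_
  have hi := Finset.mem_range.mp hi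
  rw [← integral_eq_sub_of_hasDerivAt
    (fun x hx ↦ hf x (hcell i hi (uIcc_of_le (hu i.le_succ) ▸ hx))) (hint i hi)]
  exact integral_abs_le_abs_integral_add_of_abs_sub_le (hu i.le_succ) (hint i hi) (hosc i hi)

theorem ofReal_integral_abs_deriv_le_eVariationOn {f f' : ℝ → ℝ} {a b : ℝ} (hab : a ≤ b)
    (hf : ∀ x ∈ Icc a b, HasDerivAt f (f' x) x) (hf' : ContinuousOn f' (Icc a b)) :
    ENNReal.ofReal (∫ x in a..b, |f' x|) ≤ eVariationOn f (Icc a b) := by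
  refine ENNReal.le_of_forall_pos_le_add fun ε hε _ ↦ ?_
  set ε' : ℝ := ε / (2 * (b - a) + 1)
  have hε' : 2 * ε' * (b - a) ≤ ε := by
    rw [show 2 * ε' * (b - a) = ε * (2 * (b - a) / (2 * (b - a) + 1)) by ring]
    exact mul_le_of_le_one_right ε.2 ((div_le_one (by positivity)).2 (by linarith))
  obtain ⟨d, hd, hosc⟩ := Metric.uniformContinuousOn_iff_le.mp
    (isCompact_Icc.uniformContinuousOn_of_continuous hf') ε' (by positivity)
  obtain ⟨k, hk⟩ := exists_nat_gt ((b - a) / d)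
  have hk0 : (0 : ℝ) < k := lt_of_le_of_lt (by positivity) hk
  set u : ℕ → ℝ := fun i ↦ a + i * ((b - a) / k)
  have hu : Monotone u := fun i j hij ↦ by
    simp only [u]; gcongr
  have hu0 : u 0 = a := by simp [u]
  have huk : u k = b := by simp only [u]; field_simp; ring
  have hmem : ∀ i ≤ k, u i ∈ Icc a b := fun i hi ↦ hu0 ▸ huk ▸ ⟨hu (Nat.zero_le i), hu hi⟩
  have hstep : ∀ i, u (i + 1) - u i ≤ d := fun i ↦ by
    rw [div_lt_iff₀ hd] at hk
    simpa [u, add_mul] using (div_le_iff₀ hk0).2 (by linarith)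
  have hsum := integral_abs_deriv_le_sum_abs_sub_add (f := f) (ε := ε') hu (hu0 ▸ huk ▸ hf)
    (hu0 ▸ huk ▸ hf') fun i hi x hx ↦ by
      have hcell : Icc (u i) (u (i + 1)) ⊆ Icc a b :=
        Icc_subset_Icc (hmem i hi.le).1 (hmem _ hi).2
      simpa [Real.dist_eq] using hosc x (hcell hx) (u i) (hmem i hi.le)
        (by rw [Real.dist_eq, abs_of_nonneg (by linarith [hx.1])]; linarith [hx.2, hstep i])
  rw [hu0, huk] at hsum
  calc ENNReal.ofReal (∫ x in a..b, |f' x|)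
      ≤ ENNReal.ofReal (∑ i ∈ Finset.range k, |f (u (i + 1)) - f (u i)|) + ENNReal.ofReal ε :=
        (ENNReal.ofReal_le_ofReal (hsum.trans (by linarith))).trans ENNReal.ofReal_add_le
    _ ≤ eVariationOn f (Icc a b) + ε := by
        gcongr
        · rw [ENNReal.ofReal_sum_of_nonneg fun i _ ↦ abs_nonneg _, Finset.range_eq_Ico]
          refine le_of_eq_of_le (Finset.sum_congr rfl fun i _ ↦ ?_)
            (eVariationOn.sum_le_of_monotoneOn_Icc (hu.monotoneOn _) fun i hi ↦ hmem i hi.2)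
          rw [edist_dist, Real.dist_eq]
        · simp

open Classical in
theorem card_filter_mem_uIoc_le_ncard_levelSet {f : ℝ → ℝ} {s : Set ℝ} (hs : s.OrdConnected)
    (hf : ContinuousOn f s) {u : ℕ → ℝ} (hu : Monotone u) (hus : ∀ i, u i ∈ s) {η : ℝ}
    (hη : ∀ i, f (u i) ≠ η) (hfin : {x ∈ s | f x = η}.Finite) (k : ℕ) :
    ((Finset.range k).filter fun i ↦ η ∈ uIoc (f (u i)) (f (u (i + 1)))).card ≤
      {x ∈ s | f x = η}.ncard := by
  have hroot : ∀ i, η ∈ uIoc (f (u i)) (f (u (i + 1))) →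
      ∃ x ∈ Ioo (u i) (u (i + 1)), f x = η := by
    intro i hi
    have hsub : uIcc (u i) (u (i + 1)) ⊆ s := hs.uIcc_subset (hus i) (hus (i + 1))
    obtain ⟨x, hx, hfx⟩ := intermediate_value_uIcc (hf.mono hsub) (uIoc_subset_uIcc hi)
    rw [uIcc_of_le (hu i.le_succ)] at hx
    refine ⟨x, ⟨hx.1.lt_of_ne ?_, hx.2.lt_of_ne ?_⟩, hfx⟩ <;> rintro rfl
    exacts [hη i hfx, hη (i + 1) hfx]
  choose! w hw hfw using hroot
  rw [← Set.ncard_coe_finset]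
  refine Set.ncard_le_ncard_of_injOn w (fun i hi ↦ ?_)
    (StrictMonoOn.injOn fun i hi j hj hij ↦ ?_) hfin
  · have hi := Finset.mem_filter.mp hi
    exact ⟨hs.out (hus i) (hus (i + 1)) (Ioo_subset_Icc_self (hw i hi.2)), hfw i hi.2⟩
  · calc w i < u (i + 1) := (hw i (Finset.mem_filter.mp hi).2).2
      _ ≤ u j := hu hij
      _ < w j := (hw j (Finset.mem_filter.mp hj).2).1

theorem sum_edist_le_of_ncard_levelSet_le {f : ℝ → ℝ} {s : Set ℝ} (hs : s.OrdConnected)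
    (hf : ContinuousOn f s) {M : ℝ} (hM : ∀ x ∈ s, |f x| ≤ M) {n : ℕ}
    (hn : ∀ η ∈ Icc (-M) M, {x ∈ s | f x = η}.ncard ≤ n)
    (hfin : ∀ᵐ η, {x ∈ s | f x = η}.Finite) {u : ℕ → ℝ} (hu : Monotone u) (hus : ∀ i, u i ∈ s)
    (k : ℕ) :
    ∑ i ∈ Finset.range k, edist (f (u (i + 1))) (f (u i)) ≤ n * volume (Icc (-M) M) := by
  classical
  set I : ℕ → Set ℝ := fun i ↦ uIoc (f (u i)) (f (u (i + 1)))
  have hI : ∀ i, I i ⊆ Icc (-M) M := fun i ↦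
    uIoc_subset_uIcc.trans (uIcc_subset_Icc (abs_le.mp (hM _ (hus i))) (abs_le.mp (hM _ (hus _))))
  have hcount : ∀ᵐ η, ∑ i ∈ Finset.range k, (I i).indicator 1 η ≤
      (Icc (-M) M).indicator (fun _ ↦ (n : ENNReal)) η := by
    filter_upwards [hfin, (countable_range fun i ↦ f (u i)).ae_notMem volume] with η hηfin hηu
    by_cases hη : η ∈ Icc (-M) M
    · simp only [indicator_apply, Pi.one_apply, Finset.sum_boole, hη, if_true]
      exact_mod_cast (card_filter_mem_uIoc_le_ncard_levelSet hs hf hu hus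
        (fun i h ↦ hηu ⟨i, h⟩) hηfin k).trans (hn η hη)
    · simp [indicator_of_notMem (fun h ↦ hη (hI _ h)), hη]
  calc ∑ i ∈ Finset.range k, edist (f (u (i + 1))) (f (u i))
      = ∑ i ∈ Finset.range k, ∫⁻ η, (I i).indicator 1 η := by
        refine Finset.sum_congr rfl fun i _ ↦ ?_
        rw [lintegral_indicator_one measurableSet_uIoc, Real.volume_uIoc, edist_dist, Real.dist_eq]
    _ = ∫⁻ η, ∑ i ∈ Finset.range k, (I i).indicator 1 η :=
        (lintegral_finsetSum _ fun i _ ↦ measurable_one.indicator measurableSet_uIoc).symm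
    _ ≤ ∫⁻ η, (Icc (-M) M).indicator (fun _ ↦ (n : ENNReal)) η := lintegral_mono_ae hcount
    _ = n * volume (Icc (-M) M) := lintegral_indicator_const measurableSet_Icc _

theorem eVariationOn_le_of_ncard_levelSet_le {f : ℝ → ℝ} {s : Set ℝ} (hs : s.OrdConnected)
    (hf : ContinuousOn f s) {M : ℝ} (hM : ∀ x ∈ s, |f x| ≤ M) {n : ℕ}
    (hn : ∀ η ∈ Icc (-M) M, {x ∈ s | f x = η}.ncard ≤ n)
    (hfin : ∀ᵐ η, {x ∈ s | f x = η}.Finite) :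
    eVariationOn f s ≤ n * volume (Icc (-M) M) :=
  iSup_le fun ⟨k, _, hu, hus⟩ ↦ sum_edist_le_of_ncard_levelSet_le hs hf hM hn hfin hu hus k

theorem level_set_many_points_general (δ : ℝ) (hδ : 0 < δ) (R R' : ℝ → ℝ)
    (hderiv : ∀ x ∈ Set.Icc (-δ) δ, HasDerivAt R (R' x) x)
    (hcont : ContinuousOn R' (Set.Icc (-δ) δ))
    (L M : ℝ) (hL : L = ∫ x in (-δ)..δ, |R' x|) (hM : 0 < M)
    (hub : ∀ x ∈ Set.Icc (-δ) δ, |R x| ≤ M) :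
    ∃ η ∈ Set.Icc (-M) M,
      L / (2 * M) ≤ (({x ∈ Set.Icc (-δ) δ | R x = η}).ncard : ℝ) := by
  by_contra! hfew
  set n := ⌈L / (2 * M)⌉₊ - 1
  have hpos : 0 < L / (2 * M) :=
    (Nat.cast_nonneg _).trans_lt (hfew 0 ⟨by linarith, hM.le⟩)
  have hn : ∀ η ∈ Icc (-M) M, {x ∈ Icc (-δ) δ | R x = η}.ncard ≤ n := fun η hη ↦ by
    have := Nat.lt_ceil.mpr (hfew η hη)
    omega
  have hnL : (n : ℝ) < L / (2 * M) := Nat.lt_ceil.mp (by have := Nat.ceil_pos.mpr hpos; omega)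
  have hvar := (ofReal_integral_abs_deriv_le_eVariationOn (by linarith) hderiv hcont).trans
    (eVariationOn_le_of_ncard_levelSet_le ordConnected_Icc
      (fun x hx ↦ (hderiv x hx).continuousAt.continuousWithinAt) hub hn
      (ae_finite_levelSet isCompact_Icc hderiv))
  rw [← hL, Real.volume_Icc, ← ENNReal.ofReal_natCast, ← ENNReal.ofReal_mul (Nat.cast_nonneg _),
    ENNReal.ofReal_le_ofReal_iff (mul_nonneg n.cast_nonneg (by linarith))] at hvar
  rw [lt_div_iff₀ (by positivity)] at hnL
  linarith

/-- If `R` is continuously differentiable on `[-δ, δ]` with total variation `L` and maximum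
modulus `M > 0`, then some level `η ∈ [-M, M]` is attained by `R` at least `L/(2M)` times. -/
theorem level_set_many_points (δ : ℝ) (hδ : 0 < δ) (R R' : ℝ → ℝ)
    (hderiv : ∀ x ∈ Set.Icc (-δ) δ, HasDerivAt R (R' x) x)
    (hcont : ContinuousOn R' (Set.Icc (-δ) δ))
    (L M : ℝ) (hL : L = ∫ x in (-δ)..δ, |R' x|) (hM : 0 < M)
    (hub : ∀ x ∈ Set.Icc (-δ) δ, |R x| ≤ M)
    (hattain : ∃ x ∈ Set.Icc (-δ) δ, |R x| = M) :
    ∃ η ∈ Set.Icc (-M) M,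
      L / (2 * M) ≤ (({x ∈ Set.Icc (-δ) δ | R x = η}).ncard : ℝ) :=
  level_set_many_points_general δ hδ R R' hderiv hcont L M hL hM hub
end

section
/- Let S ⊂ ℂ be a finite set, let P_{2n} ∈ 𝒫_{2n}(S) be polynomials of degree at most 2n with all coefficients in S, and suppose H is a polynomial of minimal degree m such that sup_n NC(P_{2n}H) < ∞, where NC(P) denotes the number of nonzero coefficients of P. Then every zero of H is a root of unity. -/
/-!
Write `H = (X - z) G`. By minimality of `H`, the number of nonzero coefficients of `P_{2n} G` is
unbounded, although these coefficients range over a fixed finite set `T` and `P_{2n} H` has at most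
`C` nonzero coefficients. Since `(P H)_{k+1} = (P G)_k - z (P G)_{k+1}`, on every stretch where the
coefficients of `P H` vanish those of `P G` form a geometric progression of ratio `z⁻¹`. Once
`P G` has more than `C · |T|` nonzero coefficients, such a stretch of length `|T|` starts at a
nonzero coefficient; two of its `|T| + 1` terms coincide, so `z` is a root of unity.
-/

open Polynomial

open scoped Pointwise in
theorem Polynomial.exists_finite_forall_coeff_mul_mem {R : Type*} [Semiring R] {S : Set R}
    (hS : S.Finite) (G : R[X]) :
    ∃ T : Set R, T.Finite ∧ ∀ P : R[X], (∀ k, P.coeff k ∈ S) → ∀ k, (P * G).coeff k ∈ T := by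
  induction G using Polynomial.induction_on' with
  | add G₁ G₂ h₁ h₂ =>
    obtain ⟨T₁, hT₁, hG₁⟩ := h₁
    obtain ⟨T₂, hT₂, hG₂⟩ := h₂
    refine ⟨T₁ + T₂, hT₁.add hT₂, fun P hP k => ?_⟩
    rw [mul_add, coeff_add]
    exact Set.add_mem_add (hG₁ P hP k) (hG₂ P hP k)
  | monomial n a =>
    refine ⟨insert 0 ((· * a) '' S), (hS.image _).insert 0, fun P hP k => ?_⟩
    rw [← C_mul_X_pow_eq_monomial, ← mul_assoc, coeff_mul_X_pow']
    split_ifs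
    · rw [coeff_mul_C]
      exact Set.mem_insert_of_mem _ (Set.mem_image_of_mem _ (hP _))
    · exact Set.mem_insert _ _

theorem Finset.exists_mem_forall_add_notMem_of_card_mul_lt {A E : Finset ℕ} {L : ℕ}
    (h : E.card * L < A.card) : ∃ k ∈ A, ∀ j, 0 < j → j ≤ L → k + j ∉ E := by
  classical
  have hcard : (E.biUnion fun e => Finset.Ico (e - L) e).card ≤ E.card * L :=
    Finset.card_biUnion_le_card_mul _ _ _ fun e _ => by rw [Nat.card_Ico]; omega
  obtain ⟨k, hkA, hkB⟩ := Finset.not_subset.1 fun hsub =>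
    (Finset.card_le_card hsub).not_gt (hcard.trans_lt h)
  refine ⟨k, hkA, fun j hj hjL hkj => hkB ?_⟩
  exact Finset.mem_biUnion.2 ⟨k + j, hkj, Finset.mem_Ico.2 ⟨by omega, by omega⟩⟩

theorem Polynomial.coeff_eq_pow_mul_coeff_add_of_coeff_X_sub_C_mul_eq_zero {R : Type*}
    [CommRing R] {z : R} {Q : R[X]} {k L : ℕ}
    (h : ∀ j, 0 < j → j ≤ L → ((X - C z) * Q).coeff (k + j) = 0) :
    ∀ j ≤ L, Q.coeff k = z ^ j * Q.coeff (k + j) := by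
  intro j hj
  induction j with
  | zero => simp
  | succ j ih =>
    have hstep := h (j + 1) j.succ_pos hj
    rw [← add_assoc, coeff_X_sub_C_mul, sub_eq_zero] at hstep
    rw [ih (by omega), hstep, pow_succ, mul_assoc, add_assoc]

theorem Polynomial.exists_pow_eq_one_of_card_support_mul_lt {R : Type*} [CommRing R] [IsDomain R]
    {z : R} {Q : R[X]} {T : Finset R} (hT : ∀ k, Q.coeff k ∈ T)
    (h : ((X - C z) * Q).support.card * T.card < Q.support.card) :
    ∃ q, 0 < q ∧ z ^ q = 1 := by
  obtain ⟨k, hkQ, hgap⟩ := Finset.exists_mem_forall_add_notMem_of_card_mul_lt h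
  have hgeom := coeff_eq_pow_mul_coeff_add_of_coeff_X_sub_C_mul_eq_zero
    fun j hj hjL => notMem_support_iff.1 (hgap j hj hjL)
  have hQk : Q.coeff k ≠ 0 := mem_support_iff.1 hkQ
  obtain ⟨a, ha, b, hb, hab, hQab⟩ := Finset.exists_ne_map_eq_of_card_lt_of_maps_to
    (s := Finset.range (T.card + 1)) (t := T) (by simp) fun j _ => hT (k + j)
  rw [Finset.mem_range] at ha hb
  wlog hlt : a < b generalizing a b
  · exact this b hb a ha hab.symm hQab.symm (by omega)
  have hza : z ^ a ≠ 0 := left_ne_zero_of_mul (hgeom a (by omega) ▸ hQk)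
  have hpow : z ^ a * z ^ (b - a) = z ^ a * 1 := by
    rw [← pow_add, Nat.add_sub_cancel' hlt.le, mul_one]
    refine mul_right_cancel₀ (right_ne_zero_of_mul (hgeom a (by omega) ▸ hQk)) ?_
    rw [← hgeom a (by omega), hQab, ← hgeom b (by omega)]
  exact ⟨b - a, by omega, mul_left_cancel₀ hza hpow⟩

/-- If `H` is a polynomial of minimal degree with `sup_n NC(P_{2n} H) < ∞`, where the `P_{2n}`
have all coefficients in a finite set `S ⊂ ℂ`, then every zero of `H` is a root of unity. -/
theorem minimal_H_zeros_are_roots_of_unity (S : Set ℂ) (hS : S.Finite)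
    (P : ℕ → Polynomial ℂ)
    (hdeg : ∀ n, (P n).natDegree ≤ 2 * n)
    (hcoeff : ∀ n, ∀ j ≤ 2 * n, (P n).coeff j ∈ S)
    (H : Polynomial ℂ) (hH : H ≠ 0)
    (hfin : ∃ C : ℕ, ∀ n, (P n * H).support.card ≤ C)
    (hmin : ∀ G : Polynomial ℂ, G ≠ 0 → G.natDegree < H.natDegree →
      ¬ ∃ C : ℕ, ∀ n, (P n * G).support.card ≤ C) :
    ∀ z : ℂ, H.IsRoot z → ∃ q : ℕ, 0 < q ∧ z ^ q = 1 := by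
  intro z hz
  obtain ⟨G, rfl⟩ := dvd_iff_isRoot.mpr hz
  have hG : G ≠ 0 := right_ne_zero_of_mul hH
  have hdegG : G.natDegree < ((X - C z) * G).natDegree := by
    rw [natDegree_mul (X_sub_C_ne_zero z) hG, natDegree_X_sub_C]
    omega
  have hPcoeff : ∀ n k, (P n).coeff k ∈ insert 0 S := fun n k => by
    rcases le_or_gt k (2 * n) with hk | hk
    · exact Set.mem_insert_of_mem _ (hcoeff n k hk)
    · rw [coeff_eq_zero_of_natDegree_lt ((hdeg n).trans_lt hk)]
      exact Set.mem_insert _ _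
  obtain ⟨T, hT, hPG⟩ := exists_finite_forall_coeff_mul_mem (hS.insert 0) G
  obtain ⟨C₀, hC₀⟩ := hfin
  have hunbounded := hmin G hG hdegG
  push Not at hunbounded
  obtain ⟨n, hn⟩ := hunbounded (C₀ * hT.toFinset.card)
  refine exists_pow_eq_one_of_card_support_mul_lt (Q := P n * G)
    (fun k => hT.mem_toFinset.2 (hPG (P n) (hPcoeff n) k)) ?_
  rw [← mul_left_comm]
  exact (Nat.mul_le_mul_right _ (hC₀ n)).trans_lt hn
end

section
/- Let S ⊂ ℂ be a finite set, let P_{2n} ∈ 𝒫_{2n}(S) be polynomials with all coefficients in S, and suppose H is a polynomial of minimal degree m such that sup_n NC(P_{2n}H) < ∞. Then every zero of H is simple. -/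
/-!
Since `H` is minimal, `H(0) ≠ 0` (else `H / X` would do), so wherever `P n * H` has a long run of
zero coefficients, the coefficients of `P n` obey the linear recurrence with characteristic
polynomial `H` and can be solved forwards. Windows of `deg H + 1` consecutive coefficients then
evolve by a fixed map through at most `K = |T|^(deg H + 1)` states (`T` the finite coefficient set),
so across the run they are periodic with a period dividing `p = K!`. Hence `P n * (X^p - 1)` has
nonzero coefficients only near those of `P n * H`, and their number stays bounded. The remainder
of `X^p - 1` modulo `H` is then bounded too, so it vanishes by minimality: `H` divides the separable
polynomial `X^p - 1`.
-/

open Polynomial Finset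

namespace Function

theorem iterate_add_factorial_eq {α : Type*} (f : α → α) (x : α) (s : Finset α) {K : ℕ}
    (hs : s.card ≤ K) (hx : ∀ j ≤ K, f^[j] x ∈ s) : f^[K + K.factorial] x = f^[K] x := by
  obtain ⟨u, hu, v, hv, huv, heq⟩ := exists_ne_map_eq_of_card_lt_of_maps_to
    (s := range (K + 1)) (t := s) (by simpa using Nat.lt_succ_of_le hs)
    (f := fun j => f^[j] x) (fun j hj => hx j (Nat.lt_succ_iff.mp (mem_range.mp hj)))
  wlog huv' : u < v generalizing u v
  · exact this v hv u hu huv.symm heq.symm (by omega)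
  simp only [mem_range] at hu hv
  have hper : IsPeriodicPt f (v - u) (f^[u] x) := by
    rw [IsPeriodicPt, IsFixedPt, ← iterate_add_apply, Nat.sub_add_cancel huv'.le]
    exact heq.symm
  have hfac : f^[K.factorial] (f^[u] x) = f^[u] x :=
    (hper.trans_dvd (Nat.dvd_factorial (by omega) (by omega))).eq
  calc f^[K + K.factorial] x = f^[K - u] (f^[K.factorial] (f^[u] x)) := by
        rw [← iterate_add_apply, ← iterate_add_apply]; congr 1; omega
    _ = f^[K] x := by rw [hfac, ← iterate_add_apply]; congr 1; omega

end Function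

namespace Polynomial

theorem coeff_mul_eq_sum_fin {R : Type*} [CommSemiring R] {A H : R[X]} {d n : ℕ}
    (hd : H.natDegree ≤ d) (hn : d ≤ n) :
    (A * H).coeff n = ∑ k : Fin (d + 1), H.coeff k * A.coeff (n - k) := by
  rw [mul_comm, coeff_mul, Nat.sum_antidiagonal_eq_sum_range_succ_mk,
    Fin.sum_univ_eq_sum_range (fun k => H.coeff k * A.coeff (n - k))]
  refine (sum_subset (range_subset_range.mpr (by omega)) fun k _ hk => ?_).symm
  rw [coeff_eq_zero_of_natDegree_lt (by simp at hk; omega), zero_mul]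

theorem card_support_X_mul {R : Type*} [Semiring R] (Q : R[X]) :
    (X * Q).support.card = Q.support.card := by
  have hsupp : (X * Q).support = Q.support.map ⟨Nat.succ, Nat.succ_injective⟩ := by
    ext k
    cases k <;> simp [coeff_X_mul]
  rw [hsupp, card_map]

variable {F : Type*} [Field F]

def coeffWindow (A : F[X]) (d t : ℕ) : Fin (d + 1) → F := fun i => A.coeff (t - i)

/-- The linear recurrence `∑ₖ H_k a_{t+1-k} = 0`, solved for `a_{t+1}`, as a map on windows. -/
def recurrenceStep (H : F[X]) (v : Fin (H.natDegree + 1) → F) : Fin (H.natDegree + 1) → F :=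
  Fin.cons (-(H.coeff 0)⁻¹ * ∑ i : Fin (H.natDegree + 1), H.coeff (i + 1 : ℕ) * v i) (Fin.init v)

theorem coeffWindow_succ {A H : F[X]} {t : ℕ} (hH0 : H.coeff 0 ≠ 0) (ht : H.natDegree ≤ t)
    (hz : (A * H).coeff (t + 1) = 0) :
    coeffWindow A H.natDegree (t + 1) = recurrenceStep H (coeffWindow A H.natDegree t) := by
  have hrec := coeff_mul_eq_sum_fin (A := A) (Nat.le_succ H.natDegree) (Nat.succ_le_succ ht)
  rw [hz, Fin.sum_univ_succ] at hrec
  ext i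
  cases i using Fin.cases with
  | zero =>
    simp only [coeffWindow, recurrenceStep, Fin.cons_zero, Fin.val_zero, Nat.sub_zero]
    simp only [Fin.val_succ, Fin.val_zero, Nat.sub_zero, Nat.succ_sub_succ] at hrec
    field_simp
    linear_combination -hrec
  | succ i =>
    simp only [coeffWindow, recurrenceStep, Fin.cons_succ, Fin.init, Fin.val_succ,
      Fin.val_castSucc]
    congr 1
    omega

theorem coeffWindow_add_eq_iterate {A H : F[X]} {b N : ℕ} (hH0 : H.coeff 0 ≠ 0)
    (hb : H.natDegree ≤ b) (hz : ∀ j < N, (A * H).coeff (b + j + 1) = 0) :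
    ∀ j ≤ N, coeffWindow A H.natDegree (b + j) =
      (recurrenceStep H)^[j] (coeffWindow A H.natDegree b)
  | 0, _ => rfl
  | j + 1, hj => by
    rw [Function.iterate_succ_apply', ← coeffWindow_add_eq_iterate hH0 hb hz j (by omega),
      ← add_assoc, coeffWindow_succ hH0 (by omega) (hz j hj)]

theorem coeff_add_factorial_eq {A H : F[X]} {T : Finset F} {b K : ℕ} (hA : ∀ j, A.coeff j ∈ T)
    (hH0 : H.coeff 0 ≠ 0) (hK : T.card ^ (H.natDegree + 1) ≤ K) (hb : H.natDegree ≤ b)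
    (hz : ∀ j < K + K.factorial, (A * H).coeff (b + j + 1) = 0) :
    A.coeff (b + K + K.factorial) = A.coeff (b + K) := by
  have hwin := coeffWindow_add_eq_iterate hH0 hb hz
  have hper := Function.iterate_add_factorial_eq (recurrenceStep H) (coeffWindow A _ b)
    (Fintype.piFinset fun _ => T) (by simpa using hK) fun j hj => by
      rw [← hwin j (by omega), Fintype.mem_piFinset]
      exact fun i => hA _
  rw [← hwin _ le_rfl, ← hwin K (by omega), ← add_assoc] at hper
  simpa [coeffWindow] using congrFun hper 0

theorem card_support_mul_X_pow_sub_one_le {A H : F[X]} {T : Finset F} {K : ℕ}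
    (hA : ∀ j, A.coeff j ∈ T) (hH0 : H.coeff 0 ≠ 0) (hK : T.card ^ (H.natDegree + 1) ≤ K) :
    (A * (X ^ K.factorial - 1)).support.card ≤
      H.natDegree + (K + K.factorial) * ((A * H).support.card + 1) := by
  set L := K + K.factorial
  have hsub : (A * (X ^ K.factorial - 1)).support ⊆
      range (H.natDegree + L) ∪ (A * H).support.biUnion fun i => Ico i (i + L) := by
    -- far from the support of `A * H`, the coefficient `a_{j-p} - a_j` vanishes by periodicity
    intro j hj
    rw [mem_union, or_iff_not_imp_left, mem_range, not_lt]
    intro hjL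
    by_contra hgap
    simp only [mem_biUnion, mem_Ico, not_exists, not_and, not_lt] at hgap
    have hper := coeff_add_factorial_eq (b := j - L) hA hH0 hK (by omega) fun i hi => by
      by_contra hne
      have := hgap _ (mem_support_iff.mpr hne)
      omega
    rw [mem_support_iff, mul_sub, mul_one, coeff_sub, coeff_mul_X_pow', if_pos (by omega)] at hj
    exact hj (by rw [show j = j - L + K + K.factorial by omega]; simp [hper])
  calc (A * (X ^ K.factorial - 1)).support.card
      ≤ (range (H.natDegree + L)).card + ((A * H).support.biUnion fun i => Ico i (i + L)).card :=
        (card_le_card hsub).trans (card_union_le _ _)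
    _ ≤ H.natDegree + L + (A * H).support.card * L := by
        grw [card_range, card_biUnion_le, sum_congr rfl fun i _ => Nat.card_Ico i (i + L)]
        simp
    _ = H.natDegree + L * ((A * H).support.card + 1) := by ring

end Polynomial

/-- `sup_n NC(P n * G) < ∞`, writing `NC` for the number of nonzero coefficients. -/
def BoundedTerms {R : Type*} [Semiring R] (P : ℕ → R[X]) (G : R[X]) : Prop :=
  ∃ C : ℕ, ∀ n, (P n * G).support.card ≤ C

namespace BoundedTerms

section Semiring

variable {R : Type*} [Semiring R] {P : ℕ → R[X]} {G : R[X]}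

theorem mul_right (hG : BoundedTerms P G) (Q : R[X]) : BoundedTerms P (G * Q) :=
  let ⟨C, hC⟩ := hG
  ⟨C * Q.support.card, fun n => by
    grw [← mul_assoc, card_support_mul_le, hC n]⟩

theorem of_X_mul (hG : BoundedTerms P (X * G)) : BoundedTerms P G :=
  let ⟨C, hC⟩ := hG
  ⟨C, fun n => by rw [← card_support_X_mul, (commute_X (P n)).left_comm]; exact hC n⟩

end Semiring

theorem sub {R : Type*} [Ring R] {P : ℕ → R[X]} {G G' : R[X]}
    (hG : BoundedTerms P G) (hG' : BoundedTerms P G') : BoundedTerms P (G - G') :=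
  let ⟨C, hC⟩ := hG
  let ⟨C', hC'⟩ := hG'
  ⟨C + C', fun n => by
    grw [mul_sub, sub_eq_add_neg, support_add, card_union_le, support_neg, hC n, hC' n]⟩

theorem exists_X_pow_sub_one {F : Type*} [Field F] {P : ℕ → F[X]} {H : F[X]} {T : Finset F}
    (hH : BoundedTerms P H) (hT : ∀ n j, (P n).coeff j ∈ T) (hH0 : H.coeff 0 ≠ 0) :
    ∃ p, 0 < p ∧ BoundedTerms P (X ^ p - 1) :=
  let ⟨C, hC⟩ := hH
  ⟨_, Nat.factorial_pos _, _, fun n =>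
    (card_support_mul_X_pow_sub_one_le (hT n) hH0 le_rfl).trans
      (by grw [hC n])⟩

end BoundedTerms

section Minimal

variable {F : Type*} [Field F] {P : ℕ → F[X]} {H : F[X]}

theorem dvd_of_boundedTerms_of_minimal (hH : H ≠ 0) (hfin : BoundedTerms P H)
    (hmin : ∀ G : F[X], G ≠ 0 → G.natDegree < H.natDegree → ¬ BoundedTerms P G)
    {G : F[X]} (hG : BoundedTerms P G) : H ∣ G := by
  rw [← EuclideanDomain.mod_eq_zero]
  by_contra hmod
  refine hmin _ hmod (natDegree_lt_natDegree hmod (degree_mod_lt G hH)) ?_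
  rw [eq_sub_of_add_eq (EuclideanDomain.mod_add_div G H)]
  exact hG.sub (hfin.mul_right _)

theorem coeff_zero_ne_zero_of_minimal (hH : H ≠ 0) (hfin : BoundedTerms P H)
    (hmin : ∀ G : F[X], G ≠ 0 → G.natDegree < H.natDegree → ¬ BoundedTerms P G) :
    H.coeff 0 ≠ 0 := by
  intro h0
  obtain ⟨G, rfl⟩ := X_dvd_iff.mpr h0
  have hG : G ≠ 0 := right_ne_zero_of_mul hH
  refine hmin G hG ?_ hfin.of_X_mul
  rw [natDegree_X_mul hG]
  exact Nat.lt_succ_self _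

end Minimal

/-- If `H` is a polynomial of minimal degree with `sup_n NC(P_{2n} H) < ∞`, where the `P_{2n}`
have all coefficients in a finite set `S ⊂ ℂ`, then every zero of `H` is simple. -/
theorem minimal_H_zeros_are_simple (S : Set ℂ) (hS : S.Finite)
    (P : ℕ → Polynomial ℂ)
    (hdeg : ∀ n, (P n).natDegree ≤ 2 * n)
    (hcoeff : ∀ n, ∀ j ≤ 2 * n, (P n).coeff j ∈ S)
    (H : Polynomial ℂ) (hH : H ≠ 0)
    (hfin : ∃ C : ℕ, ∀ n, (P n * H).support.card ≤ C)
    (hmin : ∀ G : Polynomial ℂ, G ≠ 0 → G.natDegree < H.natDegree →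
      ¬ ∃ C : ℕ, ∀ n, (P n * G).support.card ≤ C) :
    ∀ z : ℂ, H.rootMultiplicity z ≤ 1 := by
  obtain ⟨T, hT⟩ : ∃ T : Finset ℂ, ∀ n j, (P n).coeff j ∈ T := by
    refine ⟨insert 0 hS.toFinset, fun n j => ?_⟩
    by_cases hj : j ≤ 2 * n
    · exact mem_insert_of_mem (hS.mem_toFinset.mpr (hcoeff n j hj))
    · rw [coeff_eq_zero_of_natDegree_lt ((hdeg n).trans_lt (by omega))]
      exact mem_insert_self _ _
  obtain ⟨p, hp, hbdd⟩ := BoundedTerms.exists_X_pow_sub_one hfin hT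
    (coeff_zero_ne_zero_of_minimal hH hfin hmin)
  have hdvd : H ∣ X ^ p - C 1 := by
    simpa using dvd_of_boundedTerms_of_minimal hH hfin hmin hbdd
  exact rootMultiplicity_le_one_of_separable
    ((separable_X_pow_sub_C 1 (by exact_mod_cast hp.ne') one_ne_zero).of_dvd hdvd)
end

section
/- Let S ⊂ ℝ be finite, let P_{2n}(z) = Σ_{j=0}^{2n} a_{j,n} z^j with coefficients in S be self-reciprocal (a_{j,n} = a_{2n−j,n}), let k ≥ 1, and suppose sup_n NC(P_{2n}(z)(z^k − 1)) < ∞. Define T_n(t) := P_{2n}(e^{it}) e^{−int} and R_n(x) := ∫_0^x T_n(t) dt. Then for every δ with 0 < δ ≤ 1/(2k), sup_n max_{x∈[−δ,δ]} |R_n(x)| < ∞. -/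
/-!
Write `q_m` for the coefficients of `P_{2n}(z)(z^k - 1)`. Self-reciprocity makes
`∑_j a_{j,n} sin ((j - n) t)` vanish, so expanding `sin ((j - n + k) t)` gives
`sin (k t) · T_n(t) = ∑_m q_m sin ((m - n) t)`. Hence `R_n(x)` is the sum of `q_m` times
`∫_0^x sin ((m - n) t) / sin (k t) dt` over at most `C` indices `m`, with `|q_m| ≤ 2 max |S|`.
Each of these integrals is bounded by `3π / (2k)` uniformly in the frequency `N = m - n`
when `0 ≤ k x ≤ π / 2`: on `[0, 1 / |N|]` the integrand is at most `|N| π / (2k)`, and beyond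
`1 / |N|` integration by parts against the decreasing function `1 / sin (k t)` gains a factor
`1 / |N|`. Negative `x` reduce to positive ones since `T_n` is even.
-/

open Real MeasureTheory Polynomial Finset Set
open scoped Interval

theorem sum_range_coeff_mul_X_pow_sub_one_mul {R : Type*} [CommRing R] {p : R[X]} {D : ℕ}
    (hp : p.natDegree < D) (k : ℕ) (s : ℕ → R) :
    ∑ m ∈ range (D + k), (p * (X ^ k - 1)).coeff m * s m
      = ∑ j ∈ range D, p.coeff j * (s (j + k) - s j) := by
  have hshift : ∑ m ∈ range (D + k), (p * X ^ k).coeff m * s m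
      = ∑ j ∈ range D, p.coeff j * s (j + k) := by
    rw [add_comm, sum_range_add, sum_eq_zero fun m hm => by
      rw [coeff_mul_X_pow', if_neg (by simpa using hm), zero_mul], zero_add]
    simp_rw [add_comm k, coeff_mul_X_pow]
  have hextend : ∑ m ∈ range (D + k), p.coeff m * s m = ∑ j ∈ range D, p.coeff j * s j :=
    (sum_subset (range_subset_range.2 (Nat.le_add_right D k)) fun m _ hm => by
      rw [coeff_eq_zero_of_natDegree_lt (hp.trans_le (by simpa using hm)), zero_mul]).symm
  simp only [mul_sub, mul_one, coeff_sub, sub_mul, sum_sub_distrib, hshift, hextend]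

theorem abs_coeff_mul_X_pow_sub_one_le {R : Type*} [Ring R] [LinearOrder R] [IsOrderedRing R]
    {p : R[X]} {M : R} (hp : ∀ j, |p.coeff j| ≤ M) (k m : ℕ) :
    |(p * (X ^ k - 1)).coeff m| ≤ 2 * M := by
  have hM : 0 ≤ M := (abs_nonneg _).trans (hp 0)
  rw [mul_sub, mul_one, coeff_sub, coeff_mul_X_pow']
  split_ifs
  · exact (abs_sub _ _).trans (two_mul M ▸ add_le_add (hp _) (hp _))
  · rw [zero_sub, abs_neg]
    exact (hp m).trans (le_mul_of_one_le_left hM one_le_two)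

theorem sum_abs_coeff_mul_X_pow_sub_one_le {R : Type*} [Ring R] [LinearOrder R]
    [IsOrderedRing R] {p : R[X]} {M : R} (hp : ∀ j, |p.coeff j| ≤ M) (k : ℕ) :
    ((p * (X ^ k - 1)).sum fun _ a => |a|) ≤ #(p * (X ^ k - 1)).support * (2 * M) := by
  rw [← nsmul_eq_mul]
  exact sum_le_card_nsmul _ _ _ fun m _ => abs_coeff_mul_X_pow_sub_one_le hp k m

theorem exists_forall_abs_coeff_le {S : Set ℝ} (hS : S.Finite) {P : ℕ → ℝ[X]}
    (hdeg : ∀ n, (P n).natDegree ≤ 2 * n)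
    (hcoeff : ∀ n, ∀ j ≤ 2 * n, (P n).coeff j ∈ S) :
    ∃ M, ∀ n j, |(P n).coeff j| ≤ M := by
  obtain ⟨M, hM⟩ := ((hS.insert 0).image abs).bddAbove
  refine ⟨M, fun n j => hM ⟨_, ?_, rfl⟩⟩
  by_cases hj : j ≤ 2 * n
  · exact mem_insert_of_mem _ (hcoeff n j hj)
  · rw [coeff_eq_zero_of_natDegree_lt ((hdeg n).trans_lt (not_le.1 hj))]
    exact mem_insert _ _

theorem sum_coeff_mul_sin_eq_zero_of_symm {n : ℕ} {c : ℕ → ℝ}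
    (hc : ∀ j ≤ 2 * n, c j = c (2 * n - j)) (t : ℝ) :
    ∑ j ∈ range (2 * n + 1), c j * sin ((j - n : ℝ) * t) = 0 := by
  have hreflect : ∑ j ∈ range (2 * n + 1), c j * sin ((j - n : ℝ) * t)
      = -∑ j ∈ range (2 * n + 1), c j * sin ((j - n : ℝ) * t) := by
    conv_lhs => rw [← sum_range_reflect]
    rw [← sum_neg_distrib]
    refine sum_congr rfl fun j hj => ?_
    have hj : j ≤ 2 * n := Nat.lt_succ_iff.1 (mem_range.1 hj)
    rw [show 2 * n + 1 - 1 - j = 2 * n - j by omega, ← hc j hj, Nat.cast_sub hj,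
      ← mul_neg, ← sin_neg]
    push_cast
    ring_nf
  linarith

theorem sin_mul_sum_coeff_mul_cos {P : ℝ[X]} {n : ℕ} (hdeg : P.natDegree ≤ 2 * n)
    (hsr : ∀ j ≤ 2 * n, P.coeff j = P.coeff (2 * n - j)) (k : ℕ) (t : ℝ) :
    sin (k * t) * ∑ j ∈ range (2 * n + 1), P.coeff j * cos ((j - n : ℝ) * t)
      = (P * (X ^ k - 1)).sum fun m a => a * sin ((m - n : ℝ) * t) := by
  have hQdeg : (P * (X ^ k - 1)).natDegree < 2 * n + 1 + k := by
    refine natDegree_mul_le.trans_lt ?_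
    have := natDegree_sub_le (X ^ k : ℝ[X]) 1
    simp only [natDegree_X_pow, natDegree_one] at this
    omega
  rw [sum_over_range' _ (f := fun m a => a * sin ((m - n : ℝ) * t)) (fun _ => zero_mul _) _ hQdeg,
    sum_range_coeff_mul_X_pow_sub_one_mul (Nat.lt_succ_of_le hdeg)]
  calc sin (k * t) * ∑ j ∈ range (2 * n + 1), P.coeff j * cos ((j - n : ℝ) * t)
      = ∑ j ∈ range (2 * n + 1), (P.coeff j * cos ((j - n : ℝ) * t) * sin (k * t)
          + (cos (k * t) - 1) * (P.coeff j * sin ((j - n : ℝ) * t))) := by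
        rw [sum_add_distrib, ← mul_sum, sum_coeff_mul_sin_eq_zero_of_symm hsr, ← sum_mul]
        ring
    _ = _ := by
        refine sum_congr rfl fun j _ => ?_
        push_cast
        rw [show (j + k - n : ℝ) * t = (j - n : ℝ) * t + k * t by ring, sin_add]
        ring

theorem abs_integral_mul_le_of_deriv_nonpos {f u v v' : ℝ → ℝ} {a b c : ℝ} (hab : a ≤ b)
    (hu : ∀ t ∈ Icc a b, HasDerivAt u (f t) t) (hf : IntervalIntegrable f volume a b)
    (hv : ∀ t ∈ Icc a b, HasDerivAt v (v' t) t) (hv' : IntervalIntegrable v' volume a b)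
    (hv'_nonpos : ∀ t ∈ Icc a b, v' t ≤ 0) (hvb : 0 ≤ v b)
    (huc : ∀ t ∈ Icc a b, |u t| ≤ c) :
    |∫ t in a..b, f t * v t| ≤ 2 * c * v a := by
  rw [← uIcc_of_le hab] at hu hv
  have hparts := intervalIntegral.integral_mul_deriv_eq_deriv_mul hu hv hf hv'
  have hftc : ∫ t in a..b, v' t = v b - v a :=
    intervalIntegral.integral_eq_sub_of_hasDerivAt hv hv'
  have hv_anti : v b ≤ v a := by
    have := intervalIntegral.integral_nonneg (μ := volume) hab fun t ht =>
      neg_nonneg.2 (hv'_nonpos t ht)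
    rw [intervalIntegral.integral_neg] at this
    linarith
  have hrest : |∫ t in a..b, u t * v' t| ≤ c * (v a - v b) := by
    have hu_cont : ContinuousOn u (uIcc a b) := fun t ht =>
      (hu t ht).continuousAt.continuousWithinAt
    calc |∫ t in a..b, u t * v' t| ≤ ∫ t in a..b, |u t * v' t| :=
          intervalIntegral.abs_integral_le_integral_abs hab
      _ ≤ ∫ t in a..b, -c * v' t := by
          refine intervalIntegral.integral_mono_on hab (hv'.continuousOn_mul hu_cont).abs
            (hv'.const_mul _) fun t ht => ?_
          rw [abs_mul, abs_of_nonpos (hv'_nonpos t ht)]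
          nlinarith [huc t ht, hv'_nonpos t ht]
      _ = c * (v a - v b) := by rw [intervalIntegral.integral_const_mul, hftc]; ring
  have hend : ∀ t ∈ Icc a b, 0 ≤ v t → |u t * v t| ≤ c * v t := fun t ht hvt => by
    rw [abs_mul, abs_of_nonneg hvt]
    exact mul_le_mul_of_nonneg_right (huc t ht) hvt
  rw [show ∫ t in a..b, f t * v t = u b * v b - u a * v a - ∫ t in a..b, u t * v' t by linarith]
  calc _ ≤ |u b * v b| + |u a * v a| + |∫ t in a..b, u t * v' t| :=
        (abs_sub _ _).trans (add_le_add_left (abs_sub _ _) _)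
    _ ≤ c * v b + c * v a + c * (v a - v b) := by
        gcongr
        · exact hend b (right_mem_Icc.2 hab) hvb
        · exact hend a (left_mem_Icc.2 hab) (hvb.trans hv_anti)
    _ = 2 * c * v a := by ring

section SinRatio

variable {k : ℝ}

theorem abs_sin_mul_div_sin_mul_le (hk : 0 < k) (N : ℝ) {t : ℝ} (ht : 0 < t)
    (hkt : k * t ≤ π / 2) : |sin (N * t) / sin (k * t)| ≤ |N| * π / (2 * k) := by
  have hsin : 2 / π * (k * t) ≤ sin (k * t) := mul_le_sin (by positivity) hkt
  have hsin_pos : 0 < sin (k * t) := lt_of_lt_of_le (by positivity) hsin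
  rw [abs_div, abs_of_pos hsin_pos, div_le_iff₀ hsin_pos]
  calc |sin (N * t)| ≤ |N| * t := by
        simpa [abs_mul, abs_of_pos ht] using abs_sin_le_abs (x := N * t)
    _ = |N| * π / (2 * k) * (2 / π * (k * t)) := by field_simp
    _ ≤ |N| * π / (2 * k) * sin (k * t) := by gcongr

theorem intervalIntegrable_sin_mul_div_sin_mul (hk : 0 < k) (N : ℝ) {x : ℝ} (hx : 0 ≤ x)
    (hkx : k * x ≤ π / 2) :
    IntervalIntegrable (fun t => sin (N * t) / sin (k * t)) volume 0 x := by
  rw [intervalIntegrable_iff_integrableOn_Ioc_of_le hx]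
  refine IntegrableOn.of_bound measure_Ioc_lt_top
    (by fun_prop : Measurable fun t => sin (N * t) / sin (k * t)).aestronglyMeasurable
    (|N| * π / (2 * k)) ?_
  filter_upwards [ae_restrict_mem measurableSet_Ioc] with t ht
  exact abs_sin_mul_div_sin_mul_le hk N ht.1 (le_trans (by gcongr; exact ht.2) hkx)

theorem abs_integral_sin_mul_div_sin_mul_le_mul (hk : 0 < k) (N : ℝ) {x : ℝ} (hx : 0 ≤ x)
    (hkx : k * x ≤ π / 2) :
    |∫ t in 0..x, sin (N * t) / sin (k * t)| ≤ |N| * π / (2 * k) * x := by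
  have := intervalIntegral.norm_integral_le_of_norm_le_const (a := 0) (b := x)
    (f := fun t => sin (N * t) / sin (k * t)) (C := |N| * π / (2 * k)) fun t ht => by
      rw [uIoc_of_le hx] at ht
      exact abs_sin_mul_div_sin_mul_le hk N ht.1 (le_trans (by gcongr; exact ht.2) hkx)
  simpa [abs_of_nonneg hx] using this

theorem abs_integral_sin_mul_div_sin_mul_le_inv (hk : 0 < k) {N : ℝ} (hN : N ≠ 0) {a b : ℝ}
    (ha : 0 < a) (hab : a ≤ b) (hkb : k * b ≤ π / 2) :
    |∫ t in a..b, sin (N * t) / sin (k * t)| ≤ 2 * |N|⁻¹ * (sin (k * a))⁻¹ := by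
  have hkt : ∀ t ∈ Icc a b, k * t ∈ Ioc 0 (π / 2) := fun t ht =>
    ⟨by nlinarith [ht.1], le_trans (by gcongr; exact ht.2) hkb⟩
  have hsin : ∀ t ∈ Icc a b, 0 < sin (k * t) := fun t ht =>
    sin_pos_of_pos_of_lt_pi (hkt t ht).1 (by linarith [(hkt t ht).2, pi_pos])
  have hcos : ∀ t ∈ Icc a b, 0 ≤ cos (k * t) := fun t ht =>
    cos_nonneg_of_mem_Icc ⟨by linarith [(hkt t ht).1, pi_pos], (hkt t ht).2⟩
  have hu : ∀ t ∈ Icc a b, HasDerivAt (fun t => -cos (N * t) / N) (sin (N * t)) t := fun t _ =>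
    (((hasDerivAt_id' t).const_mul N).cos.fun_neg.div_const N).congr_deriv (by field_simp)
  have hv : ∀ t ∈ Icc a b, HasDerivAt (fun t => (sin (k * t))⁻¹)
      (-(cos (k * t) * k) / sin (k * t) ^ 2) t := fun t ht =>
    (((hasDerivAt_id' t).const_mul k).sin.fun_inv (hsin t ht).ne').congr_deriv (by rw [mul_one])
  have hv' : IntervalIntegrable (fun t => -(cos (k * t) * k) / sin (k * t) ^ 2) volume a b := by
    refine ContinuousOn.intervalIntegrable ?_
    rw [uIcc_of_le hab]
    exact ContinuousOn.div (by fun_prop) (by fun_prop) fun t ht => (pow_pos (hsin t ht) 2).ne'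
  simpa only [div_eq_mul_inv] using abs_integral_mul_le_of_deriv_nonpos hab hu
    ((by fun_prop : Continuous fun t => sin (N * t)).intervalIntegrable _ _) hv hv'
    (fun t ht => div_nonpos_of_nonpos_of_nonneg (neg_nonpos.2 (mul_nonneg (hcos t ht) hk.le))
      (sq_nonneg _))
    (inv_nonneg.2 (hsin b (right_mem_Icc.2 hab)).le)
    fun t _ => by
      rw [abs_div, abs_neg, div_eq_mul_inv]
      exact mul_le_of_le_one_left (inv_nonneg.2 (abs_nonneg N)) (abs_cos_le_one _)

theorem abs_integral_sin_mul_div_sin_mul_le (hk : 0 < k) (N : ℝ) {x : ℝ} (hx : 0 ≤ x)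
    (hkx : k * x ≤ π / 2) :
    |∫ t in 0..x, sin (N * t) / sin (k * t)| ≤ 3 * π / (2 * k) := by
  rcases le_or_gt (|N| * x) 1 with hsmall | hlarge
  · calc |∫ t in 0..x, sin (N * t) / sin (k * t)| ≤ |N| * π / (2 * k) * x :=
          abs_integral_sin_mul_div_sin_mul_le_mul hk N hx hkx
      _ = |N| * x * (π / (2 * k)) := by ring
      _ ≤ 1 * (3 * π / (2 * k)) := by gcongr; linarith [pi_pos]
      _ = 3 * π / (2 * k) := one_mul _
  have hN : 0 < |N| := by nlinarith [abs_nonneg N]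
  set a := |N|⁻¹ with ha_def
  have ha : 0 < a := inv_pos.2 hN
  have hax : a ≤ x := by rw [ha_def, inv_le_iff_one_le_mul₀ hN]; linarith
  have hka : k * a ≤ π / 2 := le_trans (by gcongr) hkx
  have hsin : 2 / π * (k * a) ≤ sin (k * a) := mul_le_sin (by positivity) hka
  have hhead := abs_integral_sin_mul_div_sin_mul_le_mul hk N ha.le hka
  have htail := abs_integral_sin_mul_div_sin_mul_le_inv hk (abs_pos.1 hN) ha hax hkx
  rw [← intervalIntegral.integral_add_adjacent_intervals
    (intervalIntegrable_sin_mul_div_sin_mul hk N ha.le hka)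
    ((intervalIntegrable_sin_mul_div_sin_mul hk N hx hkx).mono_set (by
      rw [uIcc_of_le hax, uIcc_of_le hx]; exact Icc_subset_Icc ha.le le_rfl))]
  have htail' : 2 * a * (sin (k * a))⁻¹ ≤ π / k :=
    calc 2 * a * (sin (k * a))⁻¹ ≤ 2 * a * (2 / π * (k * a))⁻¹ := by gcongr
      _ = π / k := by field_simp
  calc _ ≤ _ := abs_add_le _ _
    _ ≤ |N| * π / (2 * k) * a + π / k := add_le_add hhead (htail.trans htail')
    _ = 3 * π / (2 * k) := by rw [ha_def]; field_simp; ring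

end SinRatio

theorem intervalIntegral.integral_zero_neg_of_even {f : ℝ → ℝ} (hf : ∀ t, f (-t) = f t)
    (x : ℝ) :
    ∫ t in 0..-x, f t = -∫ t in 0..x, f t := by
  have := intervalIntegral.integral_comp_neg (a := 0) (b := x) f
  simp only [hf, neg_zero] at this
  rw [this, intervalIntegral.integral_symm]

theorem abs_integral_sum_coeff_mul_cos_le {P : ℝ[X]} {n k : ℕ} (hk : 0 < k)
    (hdeg : P.natDegree ≤ 2 * n) (hsr : ∀ j ≤ 2 * n, P.coeff j = P.coeff (2 * n - j))
    {x : ℝ} (hx : 0 ≤ x) (hkx : k * x ≤ π / 2) :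
    |∫ t in 0..x, ∑ j ∈ range (2 * n + 1), P.coeff j * cos ((j - n : ℝ) * t)|
      ≤ 3 * π / (2 * k) * (P * (X ^ k - 1)).sum fun _ a => |a| := by
  set Q := P * (X ^ k - 1)
  have hk' : (0 : ℝ) < k := Nat.cast_pos.2 hk
  have hT : ∀ t ∈ Ι 0 x, ∑ j ∈ range (2 * n + 1), P.coeff j * cos ((j - n : ℝ) * t)
      = ∑ m ∈ Q.support, Q.coeff m * (sin ((m - n : ℝ) * t) / sin (k * t)) := fun t ht => by
    rw [uIoc_of_le hx] at ht
    have hsin : sin (k * t) ≠ 0 := (sin_pos_of_pos_of_lt_pi (mul_pos hk' ht.1)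
      (by nlinarith [ht.2, pi_pos])).ne'
    simp_rw [mul_div_assoc', ← sum_div]
    rw [eq_div_iff hsin, mul_comm, sin_mul_sum_coeff_mul_cos hdeg hsr, Polynomial.sum_def]
  calc _ = |∑ m ∈ Q.support,
        Q.coeff m * ∫ t in 0..x, sin ((m - n : ℝ) * t) / sin (k * t)| := by
        rw [intervalIntegral.integral_congr_ae (ae_of_all _ hT),
          intervalIntegral.integral_finsetSum fun m _ =>
            (intervalIntegrable_sin_mul_div_sin_mul hk' _ hx hkx).const_mul _]
        simp_rw [intervalIntegral.integral_const_mul]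
    _ ≤ ∑ m ∈ Q.support, |Q.coeff m| * (3 * π / (2 * k)) :=
        (abs_sum_le_sum_abs _ _).trans (sum_le_sum fun m _ => by
          rw [abs_mul]
          gcongr
          exact abs_integral_sin_mul_div_sin_mul_le hk' _ hx hkx)
    _ = _ := by rw [← sum_mul, mul_comm, Polynomial.sum_def]

theorem antiderivative_uniformly_bounded_general (S : Set ℝ) (hS : S.Finite) (k : ℕ) (hk : 1 ≤ k)
    (P : ℕ → Polynomial ℝ)
    (hdeg : ∀ n, (P n).natDegree ≤ 2 * n)
    (hcoeff : ∀ n, ∀ j ≤ 2 * n, (P n).coeff j ∈ S)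
    (hsr : ∀ n, ∀ j ≤ 2 * n, (P n).coeff j = (P n).coeff (2 * n - j))
    (C : ℕ) (hC : ∀ n, (P n * (Polynomial.X ^ k - 1)).support.card ≤ C)
    (δ : ℝ) (hδ2 : δ ≤ 1 / (2 * k)) :
    ∃ B : ℝ, ∀ n : ℕ, ∀ x ∈ Set.Icc (-δ) δ,
      |∫ t in (0 : ℝ)..x,
        ∑ j ∈ Finset.range (2 * n + 1), (P n).coeff j * Real.cos (((j : ℝ) - n) * t)| ≤ B := by
  obtain ⟨M, hM⟩ := exists_forall_abs_coeff_le hS hdeg hcoeff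
  have hM0 : 0 ≤ M := (abs_nonneg _).trans (hM 0 0)
  refine ⟨3 * π / (2 * k) * (C * (2 * M)), fun n x hx => ?_⟩
  have hkx : (k : ℝ) * |x| ≤ π / 2 := by
    have hxδ : |x| ≤ 1 / (2 * k) := (abs_le.2 ⟨by linarith [hx.1], hx.2⟩).trans hδ2
    rw [le_div_iff₀ (by positivity)] at hxδ
    nlinarith [pi_gt_three]
  set T : ℝ → ℝ := fun t =>
    ∑ j ∈ range (2 * n + 1), (P n).coeff j * cos ((j - n : ℝ) * t)
  have heven : |∫ t in 0..x, T t| = |∫ t in 0..|x|, T t| := by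
    rcases abs_choice x with h | h <;> rw [h]
    rw [intervalIntegral.integral_zero_neg_of_even fun t => by simp only [T, mul_neg, cos_neg],
      abs_neg]
  rw [heven]
  refine (abs_integral_sum_coeff_mul_cos_le hk (hdeg n) (hsr n) (abs_nonneg x) hkx).trans ?_
  gcongr
  exact (sum_abs_coeff_mul_X_pow_sub_one_le (hM n) k).trans (by gcongr; exact_mod_cast hC n)

/-- If the self-reciprocal polynomials `P_{2n}` have coefficients in a finite set `S ⊂ ℝ` and
`sup_n NC(P_{2n}(z)(z^k - 1)) < ∞`, then the antiderivatives `R_n` of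
`T_n(t) = P_{2n}(e^{it})e^{-int}` are uniformly bounded on `[-δ, δ]` for `0 < δ ≤ 1/(2k)`. -/
theorem antiderivative_uniformly_bounded (S : Set ℝ) (hS : S.Finite) (k : ℕ) (hk : 1 ≤ k)
    (P : ℕ → Polynomial ℝ)
    (hdeg : ∀ n, (P n).natDegree ≤ 2 * n)
    (hcoeff : ∀ n, ∀ j ≤ 2 * n, (P n).coeff j ∈ S)
    (hsr : ∀ n, ∀ j ≤ 2 * n, (P n).coeff j = (P n).coeff (2 * n - j))
    (C : ℕ) (hC : ∀ n, (P n * (Polynomial.X ^ k - 1)).support.card ≤ C)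
    (δ : ℝ) (hδ1 : 0 < δ) (hδ2 : δ ≤ 1 / (2 * k)) :
    ∃ B : ℝ, ∀ n : ℕ, ∀ x ∈ Set.Icc (-δ) δ,
      |∫ t in (0 : ℝ)..x,
        ∑ j ∈ Finset.range (2 * n + 1), (P n).coeff j * Real.cos (((j : ℝ) - n) * t)| ≤ B :=
  antiderivative_uniformly_bounded_general S hS k hk P hdeg hcoeff hsr C hC δ hδ2
end
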